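/- arXiv:2106.04179 — 4 statements merged into one kernel-verified Lean document; each statement's English description precedes it below -/
import Mathlib

section
/- Let G be a finite simple graph, M an inclusion-maximal matching of G, and k ≥ 1 an integer. Let 𝒴 be a set of pairwise vertex-disjoint M-augmenting paths, each having at most 2k+1 edges, which is inclusion-maximal among such sets (no further M-augmenting path with at most 2k+1 edges can be added while keeping the paths pairwise vertex-disjoint). If |𝒴| ≤ 2·δ(k)·|M| = |M|/(k(k+2)), then M is a (1+2/k)-approximation of a maximum matching, i.e. every matching M* of G satisfies |M*| ≤ (1 + 2/k)·|M|. -/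
/-!
Common definitions: matchings as sets of edges, free vertices, alternating
paths (edge membership in `M` alternates, starting with a non-matching edge),
matched arcs (directed traversals of matched edges), etc.
-/

variable {V : Type*}

/-- `M` is a matching of `G`: a set of edges of `G` that are pairwise vertex-disjoint. -/
def IsMatchingSet (G : SimpleGraph V) (M : Set (Sym2 V)) : Prop :=
  M ⊆ G.edgeSet ∧ ∀ e ∈ M, ∀ f ∈ M, e ≠ f → ∀ v : V, ¬(v ∈ e ∧ v ∈ f)

/-- A vertex is free w.r.t. `M` if it is not an endpoint of any edge of `M`. -/
def FreeVertex (M : Set (Sym2 V)) (v : V) : Prop := ∀ e ∈ M, v ∉ e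

/-- The edges of a walk alternate between non-matching and matching edges,
beginning with a non-matching edge: the `i`-th edge is in `M` iff `i` is odd. -/
def AltEdges (M : Set (Sym2 V)) (l : List (Sym2 V)) : Prop :=
  ∀ (i : ℕ) (h : i < l.length), (l[i]'h ∈ M ↔ i % 2 = 1)

/-- A walk traverses the arc `a = (u, v)`: it crosses the edge `{u, v}`
in the direction from `u` to `v`. -/
def Traverses {G : SimpleGraph V} {x y : V} (p : G.Walk x y) (a : V × V) : Prop :=
  ∃ d ∈ p.darts, SimpleGraph.Dart.toProd d = a

/-- A walk ends by traversing the arc `a = (u, v)`, i.e. its last dart goes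
from `u` to `v`. -/
def EndsWithArc {G : SimpleGraph V} {x y : V} (p : G.Walk x y) (a : V × V) : Prop :=
  p.darts.getLast?.map SimpleGraph.Dart.toProd = some a

/-- There is an `M`-alternating path from the (free) vertex `α` to the
matched arc `a = (u, v)`: a simple path starting at `α` whose edges alternate
(beginning with a non-matching edge) and which ends by traversing the matched
edge `{u, v}` from `u` to `v`. -/
def IsAltPathToArc (G : SimpleGraph V) (M : Set (Sym2 V)) (α : V) (a : V × V) : Prop :=
  ∃ p : G.Walk α a.2, p.IsPath ∧ AltEdges M p.edges ∧ EndsWithArc p a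

/-- An alternating path of matched arcs `a 0, a 1, …, a (m-1)`: each is a
matched arc, the underlying matched edges are pairwise distinct, and
consecutive arcs are joined by an edge of `G` not in `M`. -/
def IsArcPathFn (G : SimpleGraph V) (M : Set (Sym2 V)) (a : ℕ → V × V) (m : ℕ) : Prop :=
  (∀ i < m, s((a i).1, (a i).2) ∈ M) ∧
  (∀ i < m, ∀ j < m, i ≠ j → s((a i).1, (a i).2) ≠ s((a j).1, (a j).2)) ∧
  (∀ i, i + 1 < m → G.Adj (a i).2 (a (i + 1)).1 ∧ s((a i).2, (a (i + 1)).1) ∉ M)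

/-- List version of an alternating path of matched arcs. -/
def IsArcPath (G : SimpleGraph V) (M : Set (Sym2 V)) (L : List (V × V)) : Prop :=
  (∀ a ∈ L, s(a.1, a.2) ∈ M) ∧
  (L.map fun a => s(a.1, a.2)).Nodup ∧
  List.Chain' (fun a b => G.Adj a.2 b.1 ∧ s(a.2, b.1) ∉ M) L

open Classical in
/-- The matched arcs traversed by a walk, in order. -/
noncomputable def matchedArcs {G : SimpleGraph V} (M : Set (Sym2 V)) {x y : V}
    (p : G.Walk x y) : List (V × V) :=
  (p.darts.filter fun d => decide (SimpleGraph.Dart.edge d ∈ M)).map SimpleGraph.Dart.toProd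

/-- There is an `M`-augmenting path between `x` and `y`: a simple path whose
edges alternate between matching and non-matching edges and whose first and
last edges are not in `M`. -/
def IsAugPathBetween (G : SimpleGraph V) (M : Set (Sym2 V)) (x y : V) : Prop :=
  ∃ p : G.Walk x y, p.IsPath ∧
    List.Chain' (fun e f => (e ∈ M ↔ f ∉ M)) p.edges ∧
    (∀ e ∈ p.edges.head?, e ∉ M) ∧ (∀ e ∈ p.edges.getLast?, e ∉ M)

/-- An `M`-augmenting path in `G`: a simple path between two distinct free
vertices whose edges alternate between non-matching and matching edges and
whose first and last edges are not in `M`. -/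
structure AugPath (G : SimpleGraph V) (M : Set (Sym2 V)) where
  x : V
  y : V
  ne : x ≠ y
  freeX : FreeVertex M x
  freeY : FreeVertex M y
  walk : G.Walk x y
  isPath : walk.IsPath
  alt : List.Chain' (fun e f => (e ∈ M ↔ f ∉ M)) walk.edges
  firstNotM : ∀ e ∈ walk.edges.head?, e ∉ M
  lastNotM : ∀ e ∈ walk.edges.getLast?, e ∉ M


/-! ### Auxiliary development -/

open Classical in
/-- partner of `v` in the matching `M` -/
noncomputable def pnn (M : Set (Sym2 V)) (v : V) : Option V :=
  if h : ∃ u, s(v, u) ∈ M then some h.choose else none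

lemma pnn_mem {M : Set (Sym2 V)} {v u : V} (h : pnn M v = some u) : s(v, u) ∈ M := by
  classical
  unfold pnn at h
  split at h
  · rename_i hex
    obtain rfl : hex.choose = u := by simpa using h
    exact hex.choose_spec
  · simp at h

lemma pnn_eq_some {G : SimpleGraph V} {M : Set (Sym2 V)} (hM : IsMatchingSet G M)
    {v u : V} (h : s(v, u) ∈ M) : pnn M v = some u := by
  classical
  have hex : ∃ u, s(v, u) ∈ M := ⟨u, h⟩
  have h2 : s(v, hex.choose) ∈ M := hex.choose_spec
  have : s(v, hex.choose) = s(v, u) := by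
    by_contra hne
    exact hM.2 _ h2 _ h hne v ⟨by simp, by simp⟩
  have : hex.choose = u := (Sym2.congr_right).1 this
  unfold pnn
  rw [dif_pos hex, this]

lemma pnn_ne {G : SimpleGraph V} {M : Set (Sym2 V)} (hM : IsMatchingSet G M)
    {v u : V} (h : pnn M v = some u) : u ≠ v := by
  intro he
  have hm := pnn_mem h
  rw [he] at hm
  have := hM.1 hm
  rw [SimpleGraph.mem_edgeSet] at this
  exact G.irrefl this

lemma pnn_invol {G : SimpleGraph V} {M : Set (Sym2 V)} (hM : IsMatchingSet G M)
    {v u : V} (h : pnn M v = some u) : pnn M u = some v := by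
  have := pnn_mem h
  rw [Sym2.eq_swap] at this
  exact pnn_eq_some hM this

lemma free_iff_pnn {M : Set (Sym2 V)} {v : V} : FreeVertex M v ↔ pnn M v = none := by
  classical
  constructor
  · intro hf
    unfold pnn
    rw [dif_neg]
    rintro ⟨u, hu⟩
    exact hf _ hu (by simp)
  · intro hn e he hv
    have hex : ∃ u, s(v, u) ∈ M := by
      induction e with
      | _ a b =>
        rcases Sym2.mem_iff.1 hv with rfl | rfl
        · exact ⟨b, he⟩
        · exact ⟨a, by rwa [Sym2.eq_swap]⟩
    unfold pnn at hn
    rw [dif_pos hex] at hn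
    simp at hn

/-- The alternating sequence starting at `v`: odd steps use `M'`, even steps use `M`. -/
noncomputable def altSq (M M' : Set (Sym2 V)) (v : V) : ℕ → Option V
  | 0 => some v
  | n + 1 => (altSq M M' v n).bind (fun x => if n % 2 = 0 then pnn M' x else pnn M x)

lemma altSq_zero {M M' : Set (Sym2 V)} {v : V} : altSq M M' v 0 = some v := rfl

lemma altSq_succ {M M' : Set (Sym2 V)} {v : V} (n : ℕ) :
    altSq M M' v (n + 1) = (altSq M M' v n).bind (fun x => if n % 2 = 0 then pnn M' x else pnn M x) :=
  rfl

set_option maxHeartbeats 1000000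
set_option linter.unusedSectionVars false



section S2
variable {V : Type*} {G : SimpleGraph V} {M M' : Set (Sym2 V)} {v w : V}



lemma altSq_succ_some {n : ℕ} {y : V} (h : altSq M M' v (n + 1) = some y) :
    ∃ x, altSq M M' v n = some x ∧ (if n % 2 = 0 then pnn M' x else pnn M x) = some y := by
  rw [altSq_succ] at h
  rcases h' : altSq M M' v n with _ | x
  · rw [h'] at h; simp at h
  · rw [h'] at h; exact ⟨x, rfl, h⟩

lemma altSq_none_mono {i j : ℕ} (hij : i ≤ j) (h : altSq M M' v i = none) :
    altSq M M' v j = none := by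
  induction j with
  | zero => simpa [Nat.le_zero.1 hij] using h
  | succ n ih =>
    rcases Nat.lt_or_ge i (n+1) with hlt | hge
    · have := ih (Nat.lt_succ_iff.1 hlt)
      rw [altSq_succ, this]; rfl
    · have : i = n + 1 := le_antisymm hij hge
      rwa [this] at h

lemma altSq_some_of_le {i j : ℕ} (hij : i ≤ j) {y : V} (h : altSq M M' v j = some y) :
    ∃ x, altSq M M' v i = some x := by
  rcases h' : altSq M M' v i with _ | x
  · rw [altSq_none_mono hij h'] at h; simp at h
  · exact ⟨x, rfl⟩

/-- if `x` appears at index `j+1` with `j` even, then `x`'s `M'`-partner is the previous entry -/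
lemma altSq_back_even (hM' : IsMatchingSet G M') {j : ℕ} (hj : j % 2 = 0) {x : V}
    (h : altSq M M' v (j + 1) = some x) : pnn M' x = altSq M M' v j := by
  obtain ⟨z, hz, hstep⟩ := altSq_succ_some h
  rw [if_pos hj] at hstep
  rw [pnn_invol hM' hstep, hz]

lemma altSq_back_odd (hM : IsMatchingSet G M) {j : ℕ} (hj : j % 2 = 1) {x : V}
    (h : altSq M M' v (j + 1) = some x) : pnn M x = altSq M M' v j := by
  obtain ⟨z, hz, hstep⟩ := altSq_succ_some h
  rw [if_neg (by omega)] at hstep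
  rw [pnn_invol hM hstep, hz]

/-- Cross-sequence same-parity injectivity. -/
lemma altSq_inj_parity (hM : IsMatchingSet G M) (hM' : IsMatchingSet G M')
    (hv : pnn M v = none) (hw : pnn M w = none) :
    ∀ n i j x, i + j = n → i % 2 = j % 2 →
      altSq M M' v i = some x → altSq M M' w j = some x → i = j ∧ v = w := by
  intro n
  induction n using Nat.strong_induction_on with
  | _ n ih =>
    intro i j x hsum hpar hi hj
    match i, j with
    | 0, 0 =>
      refine ⟨rfl, ?_⟩
      rw [altSq_zero] at hi hj
      have h1 : v = x := Option.some_inj.1 hi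
      have h2 : w = x := Option.some_inj.1 hj
      rw [h1, h2]
    | 0, (b+1) =>
      exfalso
      rw [altSq_zero] at hi
      obtain rfl := Option.some_inj.1 hi
      have hb : b % 2 = 1 := by omega
      have := altSq_back_odd (v := w) hM hb hj
      obtain ⟨z, hz⟩ := altSq_some_of_le (Nat.le_succ b) hj
      rw [hz, hv] at this
      simp at this
    | (a+1), 0 =>
      exfalso
      rw [altSq_zero] at hj
      obtain rfl := Option.some_inj.1 hj
      have ha : a % 2 = 1 := by omega
      have := altSq_back_odd (v := v) hM ha hi
      obtain ⟨z, hz⟩ := altSq_some_of_le (Nat.le_succ a) hi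
      rw [hz, hw] at this
      simp at this
    | (a+1), (b+1) =>
      have hab : a % 2 = b % 2 := by omega
      rcases Nat.even_or_odd a with he | ho
      · have ha : a % 2 = 0 := Nat.even_iff.1 he
        have h1 := altSq_back_even (v := v) hM' ha hi
        have h2 := altSq_back_even (v := w) hM' (by omega) hj
        obtain ⟨z, hz⟩ := altSq_some_of_le (Nat.le_succ a) hi
        have h2' : altSq M M' w b = some z := by rw [← h2, h1, hz]
        have := ih (a + b) (by omega) a b z rfl (by omega) hz h2'
        exact ⟨by omega, this.2⟩
      · have ha : a % 2 = 1 := Nat.odd_iff.1 ho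
        have h1 := altSq_back_odd (v := v) hM ha hi
        have h2 := altSq_back_odd (v := w) hM (by omega) hj
        obtain ⟨z, hz⟩ := altSq_some_of_le (Nat.le_succ a) hi
        have h2' : altSq M M' w b = some z := by rw [← h2, h1, hz]
        have := ih (a + b) (by omega) a b z rfl (by omega) hz h2'
        exact ⟨by omega, this.2⟩

/-- No vertex can appear at two indices of opposite parity in one sequence. -/
lemma altSq_not_opp (hM : IsMatchingSet G M) (hM' : IsMatchingSet G M')
    (hv : pnn M v = none) :
    ∀ j i x, i < j → i % 2 ≠ j % 2 →
      altSq M M' v i = some x → altSq M M' v j = some x → False := by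
  intro j
  induction j using Nat.strong_induction_on with
  | _ j ih =>
    intro i x hij hpar hi hj
    rcases Nat.lt_or_ge (i + 1) j with hlt | hge
    · -- gap at least 2 (hence at least 3 by parity)
      have hgap : i + 2 < j := by omega
      rcases Nat.eq_or_lt_of_le (Nat.one_le_iff_ne_zero.2 (by omega : j ≠ 0)) with h1 | h1
      · omega
      obtain ⟨b, rfl⟩ : ∃ b, j = b + 1 := ⟨j - 1, by omega⟩
      rcases Nat.eq_zero_or_pos i with rfl | hipos
      · -- i = 0 : x = v, j odd
        rw [altSq_zero] at hi
        have hxv : x = v := (Option.some_inj.1 hi).symm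
        subst hxv
        have hb : b % 2 = 0 := by omega
        have hback := altSq_back_even (v := x) hM' hb hj
        obtain ⟨z, hz⟩ := altSq_some_of_le (Nat.le_succ b) hj
        have h1' : altSq M M' x 1 = some z := by
          rw [altSq_succ 0, altSq_zero, Option.bind_some, if_pos rfl, hback, hz]
        exact ih (b) (by omega) 1 z (by omega) (by omega) h1' hz
      · -- i ≥ 1: move forward
        obtain ⟨y, hy⟩ := altSq_some_of_le (by omega : i + 1 ≤ b + 1) hj
        -- step at i and step at b use the same matching (same parity)
        rcases Nat.even_or_odd i with he | ho
        · have hi2 : i % 2 = 0 := Nat.even_iff.1 he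
          have hb2 : b % 2 = 0 := by omega
          have hstep : altSq M M' v (i+1) = pnn M' x := by
            rw [altSq_succ i, hi, Option.bind_some, if_pos hi2]
          have hback := altSq_back_even (v := v) hM' hb2 hj
          have : altSq M M' v (i+1) = altSq M M' v b := by rw [hstep, hback]
          rw [hy] at this
          exact ih b (by omega) (i+1) y (by omega) (by omega) hy this.symm
        · have hi2 : i % 2 = 1 := Nat.odd_iff.1 ho
          have hb2 : b % 2 = 1 := by omega
          have hstep : altSq M M' v (i+1) = pnn M x := by
            rw [altSq_succ i, hi, Option.bind_some, if_neg (by omega)]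
          have hback := altSq_back_odd (v := v) hM hb2 hj
          have : altSq M M' v (i+1) = altSq M M' v b := by rw [hstep, hback]
          rw [hy] at this
          exact ih b (by omega) (i+1) y (by omega) (by omega) hy this.symm
    · -- j = i + 1
      have : j = i + 1 := by omega
      subst this
      rw [altSq_succ i, hi, Option.bind_some] at hj
      rcases Nat.even_or_odd i with he | ho
      · rw [if_pos (Nat.even_iff.1 he)] at hj
        exact pnn_ne hM' hj rfl
      · have hi2 : i % 2 = 1 := Nat.odd_iff.1 ho
        rw [if_neg (by omega)] at hj
        exact pnn_ne hM hj rfl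

/-- Full single-sequence injectivity. -/
lemma altSq_inj (hM : IsMatchingSet G M) (hM' : IsMatchingSet G M')
    (hv : pnn M v = none) {i j : ℕ} {x : V}
    (hi : altSq M M' v i = some x) (hj : altSq M M' v j = some x) : i = j := by
  rcases eq_or_ne (i % 2) (j % 2) with hpar | hpar
  · exact (altSq_inj_parity hM hM' hv hv (i + j) i j x rfl hpar hi hj).1
  · exfalso
    rcases Nat.lt_or_ge i j with h | h
    · exact altSq_not_opp hM hM' hv j i x h hpar hi hj
    · rcases Nat.lt_or_ge j i with h' | h'
      · exact altSq_not_opp hM hM' hv i j x h' (Ne.symm hpar) hj hi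
      · omega

end S2

section S3
variable {V : Type*} {G : SimpleGraph V} {M M' : Set (Sym2 V)} {v : V}

noncomputable def stopN (M M' : Set (Sym2 V)) (v : V) : ℕ := sInf {n | altSq M M' v n = none}

noncomputable def gseq (M M' : Set (Sym2 V)) (v : V) (i : ℕ) : V := (altSq M M' v i).getD v

lemma gseq_eq {i : ℕ} {x : V} (h : altSq M M' v i = some x) : gseq M M' v i = x := by
  unfold gseq; rw [h]; rfl

lemma altSq_exists_none [Finite V] (hM : IsMatchingSet G M) (hM' : IsMatchingSet G M')
    (hv : pnn M v = none) : ∃ n, altSq M M' v n = none := by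
  by_contra hall
  push_neg at hall
  have hsome : ∀ n, (altSq M M' v n).isSome := fun n =>
    Option.ne_none_iff_isSome.1 (hall n)
  set f : ℕ → V := fun n => (altSq M M' v n).get (hsome n) with hf
  have hinj : Function.Injective f := by
    intro a b hab
    have ha : altSq M M' v a = some (f a) := by simp [hf]
    have hb : altSq M M' v b = some (f b) := by simp [hf]
    rw [hab] at ha
    exact altSq_inj hM hM' hv ha hb
  obtain ⟨a, b, hne, heq⟩ := Finite.exists_ne_map_eq_of_infinite f
  exact hne (hinj heq)

lemma stopN_none [Finite V] (hM : IsMatchingSet G M) (hM' : IsMatchingSet G M')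
    (hv : pnn M v = none) : altSq M M' v (stopN M M' v) = none :=
  Nat.sInf_mem (altSq_exists_none hM hM' hv)

lemma stopN_some {i : ℕ} (hi : i < stopN M M' v) : ∃ x, altSq M M' v i = some x := by
  rcases h : altSq M M' v i with _ | x
  · have hle : stopN M M' v ≤ i := Nat.sInf_le h
    omega
  · exact ⟨x, rfl⟩

lemma altSq_gseq {i : ℕ} (hi : i < stopN M M' v) : altSq M M' v i = some (gseq M M' v i) := by
  obtain ⟨x, hx⟩ := stopN_some hi
  rw [hx, gseq_eq hx]

lemma stopN_ge2 [Finite V] (hM : IsMatchingSet G M) (hM' : IsMatchingSet G M')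
    (hv : pnn M v = none) (hv' : pnn M' v ≠ none) : 2 ≤ stopN M M' v := by
  have h0 : altSq M M' v 0 = some v := altSq_zero
  have h1 : altSq M M' v 1 = pnn M' v := by
    rw [altSq_succ 0, altSq_zero, Option.bind_some, if_pos rfl]
  have hN := stopN_none hM hM' hv
  by_contra h
  interval_cases h' : stopN M M' v
  · rw [hN] at h0; exact nomatch h0
  · rw [hN] at h1; exact hv' h1.symm

lemma stopN_fail [Finite V] (hM : IsMatchingSet G M) (hM' : IsMatchingSet G M')
    (hv : pnn M v = none) (hpos : 1 ≤ stopN M M' v) :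
    (if (stopN M M' v - 1) % 2 = 0 then pnn M' (gseq M M' v (stopN M M' v - 1))
      else pnn M (gseq M M' v (stopN M M' v - 1))) = none := by
  have hN := stopN_none hM hM' hv
  have hlt : stopN M M' v - 1 < stopN M M' v := by omega
  have hu := altSq_gseq (v := v) hlt
  have heq : stopN M M' v = (stopN M M' v - 1) + 1 := by omega
  rw [heq, altSq_succ, hu, Option.bind_some] at hN
  exact hN

/-- even-index steps use `M'`-edges, which are not in `M` -/
lemma step_even (hM : IsMatchingSet G M) (hM' : IsMatchingSet G M')
    (hv : pnn M v = none) {i : ℕ} (hi : i + 1 < stopN M M' v) (hpar : i % 2 = 0) :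
    s(gseq M M' v i, gseq M M' v (i + 1)) ∈ M'
      ∧ s(gseq M M' v i, gseq M M' v (i + 1)) ∉ M := by
  have hx := altSq_gseq (v := v) (by omega : i < stopN M M' v)
  have hy := altSq_gseq (v := v) hi
  set x := gseq M M' v i
  set y := gseq M M' v (i + 1)
  have hstep : pnn M' x = some y := by
    have := hy
    rw [altSq_succ, hx, Option.bind_some, if_pos hpar] at this
    exact this
  refine ⟨pnn_mem hstep, ?_⟩
  intro hmem
  have hpx : pnn M x = some y := pnn_eq_some hM hmem
  rcases Nat.eq_zero_or_pos i with rfl | hipos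
  · rw [altSq_zero] at hx
    have : v = x := Option.some_inj.1 hx
    rw [← this] at hpx
    rw [hv] at hpx
    exact nomatch hpx
  · obtain ⟨j, rfl⟩ : ∃ j, i = j + 1 := ⟨i - 1, by omega⟩
    have hj : j % 2 = 1 := by omega
    have hback := altSq_back_odd (v := v) hM hj hx
    rw [hpx] at hback
    have := altSq_inj hM hM' hv hy hback.symm
    omega

/-- odd-index steps use `M`-edges, which are not in `M'` -/
lemma step_odd (hM : IsMatchingSet G M) (hM' : IsMatchingSet G M')
    (hv : pnn M v = none) {i : ℕ} (hi : i + 1 < stopN M M' v) (hpar : i % 2 = 1) :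
    s(gseq M M' v i, gseq M M' v (i + 1)) ∈ M
      ∧ s(gseq M M' v i, gseq M M' v (i + 1)) ∉ M' := by
  have hx := altSq_gseq (v := v) (by omega : i < stopN M M' v)
  have hy := altSq_gseq (v := v) hi
  set x := gseq M M' v i
  set y := gseq M M' v (i + 1)
  have hstep : pnn M x = some y := by
    have := hy
    rw [altSq_succ, hx, Option.bind_some, if_neg (by omega)] at this
    exact this
  refine ⟨pnn_mem hstep, ?_⟩
  intro hmem
  have hpx : pnn M' x = some y := pnn_eq_some hM' hmem
  obtain ⟨j, rfl⟩ : ∃ j, i = j + 1 := ⟨i - 1, by omega⟩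
  have hj : j % 2 = 0 := by omega
  have hback := altSq_back_even (v := v) hM' hj hx
  rw [hpx] at hback
  have := altSq_inj hM hM' hv hy hback.symm
  omega

/-- interior and even-positive vertices are `M`-matched -/
lemma idx_matchedM_even (hM : IsMatchingSet G M) {i : ℕ} (hi : i < stopN M M' v)
    (hpar : i % 2 = 0) (hipos : 1 ≤ i) : pnn M (gseq M M' v i) ≠ none := by
  obtain ⟨j, rfl⟩ : ∃ j, i = j + 1 := ⟨i - 1, by omega⟩
  have hx := altSq_gseq (v := v) hi
  have hback := altSq_back_odd (v := v) hM (by omega) hx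
  obtain ⟨z, hz⟩ := stopN_some (v := v) (by omega : j < stopN M M' v)
  rw [hback, hz]
  exact nofun

lemma idx_matchedM_odd (hM : IsMatchingSet G M) (hM' : IsMatchingSet G M')
    (hv : pnn M v = none) {i : ℕ} (hi : i + 1 < stopN M M' v) (hpar : i % 2 = 1) :
    pnn M (gseq M M' v i) ≠ none := by
  have h := (step_odd hM hM' hv hi hpar).1
  intro hn
  exact absurd (pnn_eq_some hM h) (by rw [hn]; exact nofun)

lemma idx_matchedM'_odd (hM' : IsMatchingSet G M') {i : ℕ} (hi : i < stopN M M' v)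
    (hpar : i % 2 = 1) : pnn M' (gseq M M' v i) ≠ none := by
  obtain ⟨j, rfl⟩ : ∃ j, i = j + 1 := ⟨i - 1, by omega⟩
  have hx := altSq_gseq (v := v) hi
  have hback := altSq_back_even (v := v) hM' (by omega) hx
  obtain ⟨z, hz⟩ := stopN_some (v := v) (by omega : j < stopN M M' v)
  rw [hback, hz]
  exact nofun

/-- a vertex of the sequence that is `M`-free is at index `0` or is the last
vertex, with the sequence augmenting -/
lemma free_idx (hM : IsMatchingSet G M) (hM' : IsMatchingSet G M')
    (hv : pnn M v = none) {i : ℕ} (hi : i < stopN M M' v)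
    (hfree : pnn M (gseq M M' v i) = none) :
    i = 0 ∨ (i = stopN M M' v - 1 ∧ i % 2 = 1) := by
  rcases Nat.even_or_odd i with he | ho
  · left
    by_contra h0
    exact idx_matchedM_even hM hi (Nat.even_iff.1 he) (by omega) hfree
  · right
    have hio : i % 2 = 1 := Nat.odd_iff.1 ho
    refine ⟨?_, hio⟩
    by_contra hne
    exact idx_matchedM_odd hM hM' hv (by omega) hio hfree

end S3

section S4
variable {V : Type*} {G : SimpleGraph V} {M : Set (Sym2 V)}

lemma exists_walk_of_fn (G : SimpleGraph V) :
    ∀ (n : ℕ) (g : ℕ → V), (∀ i < n, G.Adj (g i) (g (i + 1))) →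
      ∃ p : G.Walk (g 0) (g n),
        p.support = (List.range (n + 1)).map g ∧
        p.edges = (List.range n).map (fun i => s(g i, g (i + 1))) ∧
        p.length = n := by
  intro n
  induction n with
  | zero =>
    intro g _
    exact ⟨SimpleGraph.Walk.nil, by rw [show (1:ℕ) = 0+1 from rfl, List.range_succ]; simp, by simp, by simp⟩
  | succ n ih =>
    intro g h
    obtain ⟨p', hs, he, hl⟩ := ih (g ∘ Nat.succ) (fun i hi => h (i + 1) (by omega))
    refine ⟨SimpleGraph.Walk.cons (h 0 (by omega)) p', ?_, ?_, ?_⟩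
    · simp [hs, List.range_succ_eq_map, List.map_map, Function.comp_def]
    · simp [he, List.range_succ_eq_map, List.map_map, Function.comp_def]
    · rw [SimpleGraph.Walk.length_cons, hl]

lemma interior_medge {a c : V} (p : G.Walk a c)
    (hc : List.Chain' (fun e f => (e ∈ M ↔ f ∉ M)) p.edges) :
    ∀ u ∈ p.support, u ≠ a → u ≠ c → ∃ e ∈ p.edges, e ∈ M ∧ u ∈ e := by
  induction p with
  | nil =>
    intro u hu hua _
    rw [SimpleGraph.Walk.support_nil, List.mem_singleton] at hu
    exact absurd hu hua
  | @cons a b c hab q ih =>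
    intro u hu hua huc
    rw [SimpleGraph.Walk.support_cons, List.mem_cons] at hu
    rcases hu with rfl | hu
    · exact absurd rfl hua
    by_cases hub : u = b
    · subst hub
      by_cases hm : s(a, u) ∈ M
      · exact ⟨s(a, u), by simp [SimpleGraph.Walk.edges_cons], hm, by simp⟩
      · cases q with
        | nil => exact absurd rfl huc
        | @cons b d c hbd q' =>
          rw [SimpleGraph.Walk.edges_cons, SimpleGraph.Walk.edges_cons] at hc
          have hrel := List.isChain_cons_cons.1 hc
          have hmem : s(u, d) ∈ M := by
            by_contra hn
            exact hm ((hrel.1).2 hn)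
          exact ⟨s(u, d), by simp [SimpleGraph.Walk.edges_cons], hmem, by simp⟩
    · rw [SimpleGraph.Walk.edges_cons] at hc
      obtain ⟨e, he, hem, hue⟩ := ih hc.tail u hu hub huc
      exact ⟨e, by simp [SimpleGraph.Walk.edges_cons, he], hem, hue⟩

lemma edge_eq_pnn (hM : IsMatchingSet G M) {e : Sym2 V} {u : V}
    (he : e ∈ M) (hu : u ∈ e) : ∃ w, pnn M u = some w ∧ e = s(u, w) := by
  induction e with
  | _ a b =>
    rcases Sym2.mem_iff.1 hu with rfl | rfl
    · exact ⟨b, pnn_eq_some hM he, rfl⟩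
    · refine ⟨a, pnn_eq_some hM (by rwa [Sym2.eq_swap]), by rw [Sym2.eq_swap]⟩

end S4


section S5
variable {V : Type*} [Finite V] {G : SimpleGraph V} {M M' : Set (Sym2 V)} {v : V}

lemma seq_adj (hM : IsMatchingSet G M) (hM' : IsMatchingSet G M') (hv : pnn M v = none)
    {i : ℕ} (hi : i + 1 < stopN M M' v) :
    G.Adj (gseq M M' v i) (gseq M M' v (i + 1)) := by
  rcases Nat.even_or_odd i with he | ho
  · have := (step_even hM hM' hv hi (Nat.even_iff.1 he)).1
    exact (SimpleGraph.mem_edgeSet _).mp (hM'.1 this)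
  · have := (step_odd hM hM' hv hi (Nat.odd_iff.1 ho)).1
    exact (SimpleGraph.mem_edgeSet _).mp (hM.1 this)

lemma gseq_inj (hM : IsMatchingSet G M) (hM' : IsMatchingSet G M') (hv : pnn M v = none)
    {i j : ℕ} (hi : i < stopN M M' v) (hj : j < stopN M M' v)
    (hij : gseq M M' v i = gseq M M' v j) : i = j := by
  have hgi := altSq_gseq (M := M) (M' := M') (v := v) hi
  have hgj := altSq_gseq (M := M) (M' := M') (v := v) hj
  rw [hij] at hgi
  exact altSq_inj hM hM' hv hgi hgj

/-- If the sequence from `v` ends at an `M`-free vertex, it yields an augmenting path. -/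
lemma exists_augPath (hM : IsMatchingSet G M) (hM' : IsMatchingSet G M')
    (hv : pnn M v = none) (hv' : pnn M' v ≠ none)
    (hodd : (stopN M M' v - 1) % 2 = 1) :
    ∃ Q : AugPath G M, Q.x = v ∧ Q.y = gseq M M' v (stopN M M' v - 1) ∧
      Q.walk.length = stopN M M' v - 1 ∧
      Q.walk.support = (List.range (stopN M M' v)).map (gseq M M' v) := by
  have hN2 : 2 ≤ stopN M M' v := stopN_ge2 hM hM' hv hv'
  have hg0 : gseq M M' v 0 = v := gseq_eq altSq_zero
  obtain ⟨n2, hn2⟩ : ∃ m, stopN M M' v - 1 = m + 1 := ⟨stopN M M' v - 2, by omega⟩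
  obtain ⟨p, hs, he, hl⟩ := exists_walk_of_fn G (stopN M M' v - 1) (gseq M M' v)
    (fun i hi => seq_adj hM hM' hv (by omega))
  have hfreeY : pnn M (gseq M M' v (stopN M M' v - 1)) = none := by
    have := stopN_fail hM hM' hv (by omega)
    rwa [if_neg (by omega)] at this
  have hne : v ≠ gseq M M' v (stopN M M' v - 1) := by
    intro hvy
    have := gseq_inj hM hM' hv (by omega : 0 < stopN M M' v) (by omega : stopN M M' v - 1 < stopN M M' v) (by rw [hg0, ← hvy])
    omega
  have hnodup : ((List.range (stopN M M' v)).map (gseq M M' v)).Nodup := by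
    refine List.Nodup.map_on ?_ List.nodup_range
    intro i hi j hj hij
    rw [List.mem_range] at hi hj
    exact gseq_inj hM hM' hv hi hj hij
  have hchain : List.Chain' (fun e f => (e ∈ M ↔ f ∉ M)) p.edges := by
    rw [he]
    unfold List.Chain'
    rw [List.isChain_map, hn2, List.isChain_range_succ]
    intro m hm
    simp only [Nat.succ_eq_add_one]
    rcases Nat.even_or_odd m with hev | hod
    · have hm0 : m % 2 = 0 := Nat.even_iff.1 hev
      have h1 := (step_even hM hM' hv (by omega) hm0).2
      have h2 := (step_odd hM hM' hv (by omega : m + 1 + 1 < stopN M M' v) (by omega)).1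
      exact iff_of_false h1 (not_not_intro h2)
    · have hm1 : m % 2 = 1 := Nat.odd_iff.1 hod
      have h1 := (step_odd hM hM' hv (by omega) hm1).1
      have h2 := (step_even hM hM' hv (by omega : m + 1 + 1 < stopN M M' v) (by omega)).2
      exact iff_of_true h1 h2
  have hfirst : ∀ e ∈ p.edges.head?, e ∉ M := by
    intro e hmem
    rw [he, hn2, List.range_succ_eq_map, List.map_cons, List.head?_cons,
      Option.mem_some_iff] at hmem
    rw [← hmem]
    exact (step_even hM hM' hv (by omega) rfl).2
  have hlast : ∀ e ∈ p.edges.getLast?, e ∉ M := by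
    intro e hmem
    rw [he, hn2, List.range_succ, List.map_append, List.map_singleton,
      List.getLast?_concat, Option.mem_some_iff] at hmem
    rw [← hmem]
    exact (step_even hM hM' hv (by omega) (by omega)).2
  refine ⟨⟨v, gseq M M' v (stopN M M' v - 1), hne, free_iff_pnn.2 hv, free_iff_pnn.2 hfreeY,
    p.copy hg0 rfl, ?_, ?_, ?_, ?_⟩, rfl, rfl, ?_, ?_⟩
  · refine SimpleGraph.Walk.IsPath.mk' ?_
    rw [SimpleGraph.Walk.support_copy, hs, show stopN M M' v - 1 + 1 = stopN M M' v by omega]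
    exact hnodup
  · rwa [SimpleGraph.Walk.edges_copy]
  · rwa [SimpleGraph.Walk.edges_copy]
  · rwa [SimpleGraph.Walk.edges_copy]
  · rw [SimpleGraph.Walk.length_copy, hl]
  · rw [SimpleGraph.Walk.support_copy, hs, show stopN M M' v - 1 + 1 = stopN M M' v by omega]

end S5


section S6
variable {V : Type*} {G : SimpleGraph V} {M M' : Set (Sym2 V)}

lemma gseq_cross [Finite V] (hM : IsMatchingSet G M) (hM' : IsMatchingSet G M') {v w : V}
    (hv : pnn M v = none) (hw : pnn M w = none) {i j : ℕ}
    (hi : i < stopN M M' v) (hj : j < stopN M M' w) (hpar : i % 2 = j % 2)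
    (heq : gseq M M' v i = gseq M M' w j) : v = w := by
  have h1 := altSq_gseq (M := M) (M' := M') (v := v) hi
  have h2 := altSq_gseq (M := M) (M' := M') (v := w) hj
  rw [heq] at h1
  exact (altSq_inj_parity hM hM' hv hw (i + j) i j _ rfl hpar h1 h2).2

lemma card_filter_mem_sym2 [Fintype V] [DecidableEq V] {e : Sym2 V} (hd : ¬ e.IsDiag) :
    (Finset.univ.filter (· ∈ e)).card = 2 := by
  induction e with
  | _ a b =>
    have hab : a ≠ b := by simpa using hd
    have : Finset.univ.filter (· ∈ s(a, b)) = {a, b} := by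
      ext x
      simp [Sym2.mem_iff]
    rw [this, Finset.card_pair hab]

lemma card_matched [Fintype V] [DecidableEq V] (hM : IsMatchingSet G M)
    [DecidablePred fun x : V => pnn M x ≠ none] :
    (Finset.univ.filter fun x : V => pnn M x ≠ none).card = 2 * (Set.toFinite M).toFinset.card := by
  classical
  have hb : (Finset.univ.filter fun x : V => pnn M x ≠ none)
      = ((Set.toFinite M).toFinset).biUnion (fun e => Finset.univ.filter (· ∈ e)) := by
    ext x
    simp only [Finset.mem_filter, Finset.mem_biUnion, Set.Finite.mem_toFinset, Finset.mem_univ,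
      true_and]
    constructor
    · intro hx
      obtain ⟨u, hu⟩ := Option.ne_none_iff_exists'.1 hx
      exact ⟨s(x, u), pnn_mem hu, by simp⟩
    · rintro ⟨e, he, hxe⟩
      obtain ⟨w, hw, -⟩ := edge_eq_pnn hM he hxe
      rw [hw]
      exact nofun
  rw [hb, Finset.card_biUnion]
  · rw [Finset.sum_congr rfl (fun e he => card_filter_mem_sym2
      (SimpleGraph.not_isDiag_of_mem_edgeSet G (hM.1 ((Set.Finite.mem_toFinset _).1 he))))]
    rw [Finset.sum_const, smul_eq_mul, mul_comm]
  · intro e he f hf hef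
    rw [Function.onFun, Finset.disjoint_left]
    intro x hxe hxf
    rw [Finset.mem_filter] at hxe hxf
    exact hM.2 e ((Set.Finite.mem_toFinset _).1 he) f ((Set.Finite.mem_toFinset _).1 hf) hef x
      ⟨hxe.2, hxf.2⟩

/-- Counting starters of short augmenting sequences. -/
lemma short_count [Fintype V] [DecidableEq V]
    (hM : IsMatchingSet G M) (hM' : IsMatchingSet G M') (k : ℕ)
    (𝒴 : Set (AugPath G M)) (hfin : 𝒴.Finite)
    (hlen : ∀ P ∈ 𝒴, P.walk.length ≤ 2 * k + 1)
    (hmaxset : ∀ Q : AugPath G M, Q.walk.length ≤ 2 * k + 1 →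
      ∃ P ∈ 𝒴, ∃ v, v ∈ Q.walk.support ∧ v ∈ P.walk.support)
    (As : Finset V)
    (hAs : ∀ v ∈ As, pnn M v = none ∧ pnn M' v ≠ none ∧ (stopN M M' v - 1) % 2 = 1 ∧
      stopN M M' v ≤ 2 * k + 2) :
    As.card ≤ (2 * k + 4) * hfin.toFinset.card := by
  classical
  rcases As.eq_empty_or_nonempty with rfl | ⟨v0, hv0⟩
  · simp
  set tokT : AugPath G M → Finset ((V × Bool) ⊕ V) := fun P =>
    ((({P.x, P.y} : Finset V) ×ˢ (Finset.univ : Finset Bool)).image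
        (Sum.inl : V × Bool → (V × Bool) ⊕ V)) ∪
      ((P.walk.support.toFinset \ ({P.x, P.y} : Finset V)).image
        (Sum.inr : V → (V × Bool) ⊕ V)) with htokT
  have tok_bound : ∀ P ∈ hfin.toFinset, (tokT P).card ≤ 2 * k + 4 := by
    intro P hP
    have hP𝒴 : P ∈ 𝒴 := (Set.Finite.mem_toFinset _).1 hP
    have h1 : (((({P.x, P.y} : Finset V) ×ˢ (Finset.univ : Finset Bool)).image
        (Sum.inl : V × Bool → (V × Bool) ⊕ V))).card ≤ 4 := by
      refine le_trans Finset.card_image_le ?_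
      rw [Finset.card_product]
      have : ({P.x, P.y} : Finset V).card ≤ 2 :=
        le_trans (Finset.card_insert_le _ _) (by simp)
      have hb : (Finset.univ : Finset Bool).card = 2 := by simp
      rw [hb]
      omega
    have h2 : ((P.walk.support.toFinset \ ({P.x, P.y} : Finset V)).image
        (Sum.inr : V → (V × Bool) ⊕ V)).card ≤ 2 * k := by
      refine le_trans Finset.card_image_le ?_
      have hsub : ({P.x, P.y} : Finset V) ⊆ P.walk.support.toFinset := by
        intro x hx
        rw [List.mem_toFinset]
        rcases Finset.mem_insert.1 hx with rfl | hx
        · exact SimpleGraph.Walk.start_mem_support _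
        · rw [Finset.mem_singleton.1 hx]
          exact SimpleGraph.Walk.end_mem_support _
      rw [Finset.card_sdiff_of_subset hsub, Finset.card_pair P.ne,
        List.toFinset_card_of_nodup P.isPath.support_nodup,
        SimpleGraph.Walk.length_support]
      have := hlen P hP𝒴
      omega
    calc (tokT P).card ≤ _ + _ := Finset.card_union_le _ _
      _ ≤ 2 * k + 4 := by omega
  -- the specification carried by a token
  set spec : V → ((V × Bool) ⊕ V) → Prop := fun v t =>
    (∀ u b, t = Sum.inl (u, b) → ((b = true → v = u) ∧
      (b = false → u = gseq M M' v (stopN M M' v - 1)))) ∧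
    (∀ a, t = Sum.inr a → ∃ i, i < stopN M M' v ∧ i % 2 = 1 ∧ gseq M M' v i = a) with hspecdef
  have key : ∀ v ∈ As, ∃ pr : AugPath G M × ((V × Bool) ⊕ V),
      pr.1 ∈ 𝒴 ∧ pr.2 ∈ tokT pr.1 ∧ spec v pr.2 := by
    intro v hv
    obtain ⟨hvfree, hv', hodd, hNle⟩ := hAs v hv
    obtain ⟨Q, hQx, hQy, hQlen, hQsupp⟩ := exists_augPath hM hM' hvfree hv' hodd
    obtain ⟨P, hP, u, huQ, huP⟩ := hmaxset Q (by rw [hQlen]; omega)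
    rw [hQsupp] at huQ
    obtain ⟨i, hiR, hgi⟩ := List.mem_map.1 huQ
    rw [List.mem_range] at hiR
    by_cases hufree : pnn M u = none
    · have huxy : u = P.x ∨ u = P.y := by
        by_contra hcon
        push_neg at hcon
        obtain ⟨e, heE, heM, hue⟩ := interior_medge P.walk P.alt u huP hcon.1 hcon.2
        obtain ⟨w, hw, -⟩ := edge_eq_pnn hM heM hue
        rw [hufree] at hw
        exact nomatch hw
      have hmemtok : ∀ b : Bool, Sum.inl (u, b) ∈ tokT P := by
        intro b
        rw [htokT]
        refine Finset.mem_union_left _ (Finset.mem_image.2 ⟨(u, b), ?_, rfl⟩)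
        rw [Finset.mem_product]
        refine ⟨?_, Finset.mem_univ _⟩
        rcases huxy with rfl | rfl
        · exact Finset.mem_insert_self _ _
        · exact Finset.mem_insert_of_mem (Finset.mem_singleton_self _)
      have hidx := free_idx hM hM' hvfree hiR (by rwa [hgi])
      rcases hidx with rfl | ⟨hi1, _⟩
      · refine ⟨(P, Sum.inl (u, true)), hP, hmemtok true, ?_, ?_⟩
        · intro u' b' heq
          obtain ⟨h1, h2⟩ : u' = u ∧ b' = true := by
            constructor <;> · injection heq with h; cases h; rfl
          subst h1; subst h2
          refine ⟨fun _ => ?_, fun h => by simp at h⟩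
          rw [← hgi, gseq_eq altSq_zero]
        · intro a ha
          exact absurd ha (by simp)
      · refine ⟨(P, Sum.inl (u, false)), hP, hmemtok false, ?_, ?_⟩
        · intro u' b' heq
          obtain ⟨h1, h2⟩ : u' = u ∧ b' = false := by
            constructor <;> · injection heq with h; cases h; rfl
          subst h1; subst h2
          refine ⟨fun h => by simp at h, fun _ => ?_⟩
          rw [← hgi, hi1]
        · intro a ha
          exact absurd ha (by simp)
    · have hux : u ≠ P.x := by
        intro h
        rw [h] at hufree
        exact hufree (free_iff_pnn.1 P.freeX)
      have huy : u ≠ P.y := by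
        intro h
        rw [h] at hufree
        exact hufree (free_iff_pnn.1 P.freeY)
      obtain ⟨e, heE, heM, hue⟩ := interior_medge P.walk P.alt u huP hux huy
      obtain ⟨z, hz, hez⟩ := edge_eq_pnn hM heM hue
      have hzmem : z ∈ P.walk.support := by
        rw [hez] at heE
        exact SimpleGraph.Walk.snd_mem_support_of_mem_edges P.walk heE
      have hzx : z ≠ P.x := by
        intro h
        have := free_iff_pnn.1 P.freeX
        rw [← h] at this
        rw [pnn_invol hM hz] at this
        exact nomatch this
      have hzy : z ≠ P.y := by
        intro h
        have := free_iff_pnn.1 P.freeY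
        rw [← h] at this
        rw [pnn_invol hM hz] at this
        exact nomatch this
      have hinr : ∀ a, a ∈ P.walk.support → a ≠ P.x → a ≠ P.y → Sum.inr a ∈ tokT P := by
        intro a ha hax hay
        rw [htokT]
        refine Finset.mem_union_right _ (Finset.mem_image.2 ⟨a, ?_, rfl⟩)
        rw [Finset.mem_sdiff, List.mem_toFinset]
        refine ⟨ha, ?_⟩
        simp [hax, hay]
      rcases Nat.even_or_odd i with hie | hio
      · -- even index: the partner z sits at the odd index i - 1
        have hie' : i % 2 = 0 := Nat.even_iff.1 hie
        have hi1 : 1 ≤ i := by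
          rcases Nat.eq_zero_or_pos i with rfl | h
          · exfalso
            rw [gseq_eq altSq_zero] at hgi
            rw [← hgi] at hufree
            exact hufree hvfree
          · exact h
        have hstep : altSq M M' v ((i - 1) + 1) = some u := by
          rw [show i - 1 + 1 = i by omega]
          rw [← hgi]
          exact altSq_gseq hiR
        have hback := altSq_back_odd (v := v) hM (by omega) hstep
        rw [hz] at hback
        have hgz : gseq M M' v (i - 1) = z := gseq_eq hback.symm
        refine ⟨(P, Sum.inr z), hP, hinr z hzmem hzx hzy, ?_, ?_⟩
        · intro u' b' heq
          exact absurd heq (by simp)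
        · intro a ha
          obtain rfl : z = a := by injection ha
          exact ⟨i - 1, by omega, by omega, hgz⟩
      · -- odd index: u itself sits at an odd index
        have hio' : i % 2 = 1 := Nat.odd_iff.1 hio
        refine ⟨(P, Sum.inr u), hP, hinr u huP hux huy, ?_, ?_⟩
        · intro u' b' heq
          exact absurd heq (by simp)
        · intro a ha
          obtain rfl : u = a := by injection ha
          exact ⟨i, hiR, hio', hgi⟩
  choose fpr hfpr1 hfpr2 hfpr3 using key
  set FF : V → AugPath G M × ((V × Bool) ⊕ V) := fun v =>
    if h : v ∈ As then fpr v h else fpr v0 hv0 with hFF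
  have hFmem : ∀ v ∈ As, FF v ∈ hfin.toFinset.biUnion
      (fun P => (tokT P).image (fun t => (P, t))) := by
    intro v hv
    rw [hFF]
    simp only [dif_pos hv]
    refine Finset.mem_biUnion.2 ⟨(fpr v hv).1, (Set.Finite.mem_toFinset _).2 (hfpr1 v hv), ?_⟩
    exact Finset.mem_image.2 ⟨(fpr v hv).2, hfpr2 v hv, rfl⟩
  have hFinj : Set.InjOn FF As := by
    intro v hv w hw heq
    rw [Finset.mem_coe] at hv hw
    rw [hFF] at heq
    simp only [dif_pos hv, dif_pos hw] at heq
    have hPeq : (fpr v hv).1 = (fpr w hw).1 := congrArg Prod.fst heq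
    have hteq : (fpr v hv).2 = (fpr w hw).2 := congrArg Prod.snd heq
    obtain ⟨hvfree, hv', hoddv, hNlev⟩ := hAs v hv
    obtain ⟨hwfree, hw', hoddw, hNlew⟩ := hAs w hw
    rcases htv : (fpr v hv).2 with ⟨u, b⟩ | a
    · have htw : (fpr w hw).2 = Sum.inl (u, b) := by rw [← hteq, htv]
      have sv := (hfpr3 v hv).1 u b htv
      have sw := (hfpr3 w hw).1 u b htw
      cases b with
      | true => rw [sv.1 rfl, sw.1 rfl]
      | false =>
        have h1 := sv.2 rfl
        have h2 := sw.2 rfl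
        refine gseq_cross hM hM' hvfree hwfree
          (by omega : stopN M M' v - 1 < stopN M M' v)
          (by omega : stopN M M' w - 1 < stopN M M' w) (by omega) ?_
        rw [← h1, ← h2]
    · have htw : (fpr w hw).2 = Sum.inr a := by rw [← hteq, htv]
      obtain ⟨i, hi, hipar, hgi⟩ := (hfpr3 v hv).2 a htv
      obtain ⟨j, hj, hjpar, hgj⟩ := (hfpr3 w hw).2 a htw
      exact gseq_cross hM hM' hvfree hwfree hi hj (by omega) (by rw [hgi, hgj])
  calc As.card ≤ (hfin.toFinset.biUnion (fun P => (tokT P).image (fun t => (P, t)))).card :=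
        Finset.card_le_card_of_injOn FF hFmem hFinj
    _ ≤ ∑ P ∈ hfin.toFinset, ((tokT P).image (fun t => (P, t))).card := Finset.card_biUnion_le
    _ ≤ ∑ P ∈ hfin.toFinset, (2 * k + 4) := by
        refine Finset.sum_le_sum ?_
        intro P hP
        exact le_trans Finset.card_image_le (tok_bound P hP)
    _ = (2 * k + 4) * hfin.toFinset.card := by
        rw [Finset.sum_const, smul_eq_mul, mul_comm]

end S6

/-- If `M` is an inclusion-maximal matching and `𝒴` is an
inclusion-maximal set of pairwise vertex-disjoint `M`-augmenting paths, each with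
at most `2k+1` edges, with `|𝒴| ≤ |M| / (k (k + 2)) = 2 δ(k) |M|`, then `M` is a
`(1 + 2/k)`-approximate maximum matching. -/
theorem maximal_few_short_aug_paths_implies_approx
    [Fintype V] (G : SimpleGraph V) (M : Set (Sym2 V))
    (hM : IsMatchingSet G M)
    (hmaximal : ∀ e ∈ G.edgeSet, e ∉ M → ¬ IsMatchingSet G (insert e M))
    (k : ℕ) (hk : 1 ≤ k)
    (𝒴 : Set (AugPath G M)) (hfin : 𝒴.Finite)
    (hlen : ∀ P ∈ 𝒴, P.walk.length ≤ 2 * k + 1)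
    (hdisj : ∀ P ∈ 𝒴, ∀ Q ∈ 𝒴, P ≠ Q → ∀ v, v ∈ P.walk.support → v ∉ Q.walk.support)
    (hmaxset : ∀ Q : AugPath G M, Q.walk.length ≤ 2 * k + 1 →
      ∃ P ∈ 𝒴, ∃ v, v ∈ Q.walk.support ∧ v ∈ P.walk.support)
    (hcard : (𝒴.ncard : ℝ) ≤ (M.ncard : ℝ) / (k * (k + 2))) :
    ∀ M' : Set (Sym2 V), IsMatchingSet G M' →
      (M'.ncard : ℝ) ≤ (1 + 2 / k) * (M.ncard : ℝ) := by
  intro M2 hM2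
  classical
  set Mf := (Set.toFinite M).toFinset with hMf
  set M2f := (Set.toFinite M2).toFinset with hM2f
  set Y := Finset.univ.filter (fun x : V => pnn M x ≠ none) with hY
  set X := Finset.univ.filter (fun x : V => pnn M2 x ≠ none) with hX
  set Fr := Finset.univ.filter (fun x : V => pnn M x = none ∧ pnn M2 x ≠ none) with hFr
  set A := Fr.filter (fun v => (stopN M M2 v - 1) % 2 = 1) with hA
  set Hh := Fr \ A with hHh
  set As := A.filter (fun v => stopN M M2 v ≤ 2 * k + 2) with hAsdef
  set Al := A \ As with hAldef
  have cY : Y.card = 2 * Mf.card := card_matched hM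
  have cX : X.card = 2 * M2f.card := card_matched hM2
  have hXY : X \ Y = Fr := by
    ext x
    simp only [hX, hY, hFr, Finset.mem_sdiff, Finset.mem_filter, Finset.mem_univ, true_and]
    tauto
  have cXY : (X ∩ Y).card + Fr.card = X.card := by
    rw [← hXY]
    exact Finset.card_inter_add_card_sdiff X Y
  have cYX : (Y ∩ X).card + (Y \ X).card = Y.card := Finset.card_inter_add_card_sdiff Y X
  have interXY : (X ∩ Y).card = (Y ∩ X).card := by rw [Finset.inter_comm]
  -- members of Fr are the starters of alternating sequences
  have hFrmem : ∀ v ∈ Fr, pnn M v = none ∧ pnn M2 v ≠ none := by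
    intro v hv
    rw [hFr, Finset.mem_filter] at hv
    exact hv.2
  -- halves inject into Y \ X
  have cH : Hh.card ≤ (Y \ X).card := by
    refine Finset.card_le_card_of_injOn (fun v => gseq M M2 v (stopN M M2 v - 1)) ?_ ?_
    · intro v hv
      rw [hHh, Finset.mem_coe, Finset.mem_sdiff] at hv
      obtain ⟨hvfree, hv2⟩ := hFrmem v hv.1
      have hpar : (stopN M M2 v - 1) % 2 = 0 := by
        have : ¬ ((stopN M M2 v - 1) % 2 = 1) := by
          intro hodd
          exact hv.2 (by rw [hA, Finset.mem_filter]; exact ⟨hv.1, hodd⟩)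
        omega
      have hN2 : 2 ≤ stopN M M2 v := stopN_ge2 hM hM2 hvfree hv2
      have hmat : pnn M (gseq M M2 v (stopN M M2 v - 1)) ≠ none :=
        idx_matchedM_even hM (by omega) hpar (by omega)
      have hfail : pnn M2 (gseq M M2 v (stopN M M2 v - 1)) = none := by
        have := stopN_fail hM hM2 hvfree (by omega)
        rwa [if_pos hpar] at this
      rw [Finset.mem_coe, Finset.mem_sdiff, hY, hX, Finset.mem_filter, Finset.mem_filter]
      exact ⟨⟨Finset.mem_univ _, hmat⟩, by simp [hfail]⟩
    · intro v hv w hw heq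
      rw [Finset.mem_coe, hHh, Finset.mem_sdiff] at hv hw
      obtain ⟨hvfree, hv2⟩ := hFrmem v hv.1
      obtain ⟨hwfree, hw2⟩ := hFrmem w hw.1
      have hNv : 2 ≤ stopN M M2 v := stopN_ge2 hM hM2 hvfree hv2
      have hNw : 2 ≤ stopN M M2 w := stopN_ge2 hM hM2 hwfree hw2
      have hparv : (stopN M M2 v - 1) % 2 = 0 := by
        have : ¬ ((stopN M M2 v - 1) % 2 = 1) := by
          intro hodd
          exact hv.2 (by rw [hA, Finset.mem_filter]; exact ⟨hv.1, hodd⟩)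
        omega
      have hparw : (stopN M M2 w - 1) % 2 = 0 := by
        have : ¬ ((stopN M M2 w - 1) % 2 = 1) := by
          intro hodd
          exact hw.2 (by rw [hA, Finset.mem_filter]; exact ⟨hw.1, hodd⟩)
        omega
      exact gseq_cross hM hM2 hvfree hwfree (by omega) (by omega) (by omega) heq
  have cF : Hh.card + A.card = Fr.card := by
    rw [hHh]
    exact Finset.card_sdiff_add_card_eq_card (Finset.filter_subset _ _)
  have cA : Al.card + As.card = A.card := by
    rw [hAldef]
    exact Finset.card_sdiff_add_card_eq_card (Finset.filter_subset _ _)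
  -- long augmenting sequences
  have cAl : Al.card * (k + 1) ≤ Y.card := by
    have hAlfacts : ∀ v ∈ Al, pnn M v = none ∧ pnn M2 v ≠ none ∧ 2 * k + 4 ≤ stopN M M2 v := by
      intro v hv
      rw [hAldef, Finset.mem_sdiff, hA, Finset.mem_filter] at hv
      obtain ⟨⟨hvFr, hodd⟩, hnotAs⟩ := hv
      obtain ⟨hvfree, hv2⟩ := hFrmem v hvFr
      have hN : ¬ (stopN M M2 v ≤ 2 * k + 2) := by
        intro hle
        exact hnotAs (by rw [hAsdef, Finset.mem_filter, hA, Finset.mem_filter]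
                         exact ⟨⟨hvFr, hodd⟩, hle⟩)
      exact ⟨hvfree, hv2, by omega⟩
    have hdisjS : ∀ v ∈ Al, ∀ w ∈ Al, v ≠ w →
        Disjoint ((Finset.range (k + 1)).image (fun s => gseq M M2 v (2 * s + 1)))
          ((Finset.range (k + 1)).image (fun s => gseq M M2 w (2 * s + 1))) := by
      intro v hv w hw hvw
      obtain ⟨hvfree, hv2, hNv⟩ := hAlfacts v hv
      obtain ⟨hwfree, hw2, hNw⟩ := hAlfacts w hw
      rw [Finset.disjoint_left]
      intro x hxv hxw
      obtain ⟨s1, hs1, hg1⟩ := Finset.mem_image.1 hxv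
      obtain ⟨s2, hs2, hg2⟩ := Finset.mem_image.1 hxw
      rw [Finset.mem_range] at hs1 hs2
      refine hvw (gseq_cross hM hM2 hvfree hwfree
        (by omega : 2 * s1 + 1 < stopN M M2 v)
        (by omega : 2 * s2 + 1 < stopN M M2 w) (by omega) ?_)
      rw [hg1, hg2]
    have hsubY : Al.biUnion (fun v => (Finset.range (k + 1)).image
        (fun s => gseq M M2 v (2 * s + 1))) ⊆ Y := by
      intro x hx
      obtain ⟨v, hv, hxv⟩ := Finset.mem_biUnion.1 hx
      obtain ⟨hvfree, hv2, hNv⟩ := hAlfacts v hv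
      obtain ⟨s1, hs1, hg1⟩ := Finset.mem_image.1 hxv
      rw [Finset.mem_range] at hs1
      rw [hY, Finset.mem_filter]
      refine ⟨Finset.mem_univ _, ?_⟩
      rw [← hg1]
      exact idx_matchedM_odd hM hM2 hvfree (by omega) (by omega)
    calc Al.card * (k + 1)
        = ∑ v ∈ Al, ((Finset.range (k + 1)).image (fun s => gseq M M2 v (2 * s + 1))).card := by
          rw [Finset.sum_congr rfl (fun v hv => ?_), Finset.sum_const, smul_eq_mul]
          obtain ⟨hvfree, hv2, hNv⟩ := hAlfacts v hv
          rw [Finset.card_image_of_injOn, Finset.card_range]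
          intro s1 hs1 s2 hs2 hg
          rw [Finset.mem_coe, Finset.mem_range] at hs1 hs2
          have := gseq_inj hM hM2 hvfree (by omega : 2 * s1 + 1 < stopN M M2 v)
            (by omega : 2 * s2 + 1 < stopN M M2 v) hg
          omega
      _ = (Al.biUnion (fun v => (Finset.range (k + 1)).image
            (fun s => gseq M M2 v (2 * s + 1)))).card := (Finset.card_biUnion hdisjS).symm
      _ ≤ Y.card := Finset.card_le_card hsubY
  -- short augmenting sequences
  have cAs : As.card ≤ (2 * k + 4) * hfin.toFinset.card := by
    refine short_count hM hM2 k 𝒴 hfin hlen hmaxset As ?_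
    intro v hv
    rw [hAsdef, Finset.mem_filter, hA, Finset.mem_filter] at hv
    obtain ⟨⟨hvFr, hodd⟩, hle⟩ := hv
    obtain ⟨hvfree, hv2⟩ := hFrmem v hvFr
    exact ⟨hvfree, hv2, hodd, hle⟩
  -- assemble in ℕ
  have nat1 : 2 * M2f.card ≤ 2 * Mf.card + As.card + Al.card := by omega
  -- move to ℝ
  have hMn : (M.ncard : ℝ) = (Mf.card : ℝ) := by
    rw [Set.ncard_eq_toFinset_card M (Set.toFinite M)]
  have hM2n : (M2.ncard : ℝ) = (M2f.card : ℝ) := by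
    rw [Set.ncard_eq_toFinset_card M2 (Set.toFinite M2)]
  have hYn : (𝒴.ncard : ℝ) = (hfin.toFinset.card : ℝ) := by
    rw [Set.ncard_eq_toFinset_card 𝒴 hfin]
  rw [hM2n, hMn]
  rw [hMn] at hcard
  rw [hYn] at hcard
  have hk' : (1 : ℝ) ≤ (k : ℝ) := by exact_mod_cast hk
  have hkpos : (0 : ℝ) < (k : ℝ) := by linarith
  have r1 : 2 * (M2f.card : ℝ) ≤ 2 * (Mf.card : ℝ) + (As.card : ℝ) + (Al.card : ℝ) := by
    exact_mod_cast nat1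
  have r2 : (Al.card : ℝ) * ((k : ℝ) + 1) ≤ 2 * (Mf.card : ℝ) := by
    have : Al.card * (k + 1) ≤ 2 * Mf.card := by omega
    exact_mod_cast this
  have r3 : (As.card : ℝ) ≤ (2 * (k : ℝ) + 4) * (hfin.toFinset.card : ℝ) := by
    exact_mod_cast cAs
  have hkk2 : (0 : ℝ) < (k : ℝ) * ((k : ℝ) + 2) := by nlinarith
  have r4 : (hfin.toFinset.card : ℝ) * ((k : ℝ) * ((k : ℝ) + 2)) ≤ (Mf.card : ℝ) := by
    rw [← le_div_iff₀ hkk2]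
    calc (hfin.toFinset.card : ℝ) ≤ (Mf.card : ℝ) / ((k : ℝ) * ((k : ℝ) + 2)) := by
          refine le_trans hcard (le_of_eq ?_)
          push_cast
          ring_nf
      _ = _ := rfl
  have hm0 : (0 : ℝ) ≤ (Mf.card : ℝ) := Nat.cast_nonneg _
  have hs0 : (0 : ℝ) ≤ (As.card : ℝ) := Nat.cast_nonneg _
  have hl0 : (0 : ℝ) ≤ (Al.card : ℝ) := Nat.cast_nonneg _
  have hy0 : (0 : ℝ) ≤ (hfin.toFinset.card : ℝ) := Nat.cast_nonneg _
  -- s * k ≤ 2 m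
  have hsk : (As.card : ℝ) * (k : ℝ) ≤ 2 * (Mf.card : ℝ) := by
    have h1 : (As.card : ℝ) * ((k : ℝ) * ((k : ℝ) + 2))
        ≤ ((2 * (k : ℝ) + 4) * (hfin.toFinset.card : ℝ)) * ((k : ℝ) * ((k : ℝ) + 2)) :=
      mul_le_mul_of_nonneg_right r3 (le_of_lt hkk2)
    have h2 : ((2 * (k : ℝ) + 4) * (hfin.toFinset.card : ℝ)) * ((k : ℝ) * ((k : ℝ) + 2))
        ≤ (2 * (k : ℝ) + 4) * (Mf.card : ℝ) := by
      have := mul_le_mul_of_nonneg_left r4 (by linarith : (0 : ℝ) ≤ 2 * (k : ℝ) + 4)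
      calc ((2 * (k : ℝ) + 4) * (hfin.toFinset.card : ℝ)) * ((k : ℝ) * ((k : ℝ) + 2))
          = (2 * (k : ℝ) + 4) * ((hfin.toFinset.card : ℝ) * ((k : ℝ) * ((k : ℝ) + 2))) := by ring
        _ ≤ (2 * (k : ℝ) + 4) * (Mf.card : ℝ) := this
    have h3 : (As.card : ℝ) * (k : ℝ) * ((k : ℝ) + 2) ≤ 2 * (Mf.card : ℝ) * ((k : ℝ) + 2) := by
      nlinarith
    exact le_of_mul_le_mul_right h3 (by linarith)
  have hlk : (Al.card : ℝ) * (k : ℝ) ≤ 2 * (Mf.card : ℝ) := by nlinarith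
  have hgoal : (1 + 2 / (k : ℝ)) * (Mf.card : ℝ) = ((k : ℝ) * (Mf.card : ℝ) + 2 * (Mf.card : ℝ)) / (k : ℝ) := by
    field_simp
  rw [hgoal, le_div_iff₀ hkpos]
  nlinarith [mul_le_mul_of_nonneg_right r1 (le_of_lt hkpos)]
end

section
/- Let G be a finite simple graph with matching M, let α be a free vertex, and let (a_1, …, a_m), m ≥ 2, be an alternating path of matched arcs. Suppose P is an M-alternating path from α to the reverse arc ←a_m such that P traverses none of the matched arcs a_1, …, a_{m−1}. Then there exists an M-alternating path from α to the reverse arc ←a_1. -/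
/-!
Common definitions: matchings as sets of edges, free vertices, alternating
paths (edge membership in `M` alternates, starting with a non-matching edge),
matched arcs (directed traversals of matched edges), etc.
-/

variable {V : Type*}

open SimpleGraph

/-- Helper: prefix of alternating edge list is alternating. -/
lemma altEdges_prefix {M : Set (Sym2 V)} {l1 l2 : List (Sym2 V)}
    (h : AltEdges M (l1 ++ l2)) : AltEdges M l1 := by
  intro i hi
  have h' := h i (by rw [List.length_append]; omega)
  rwa [List.getElem_append_left hi] at h'

/-- Helper: the last dart of a walk ends at the walk's endpoint. -/
lemma snd_of_getLast?_darts {G : SimpleGraph V} {x y : V} {p : G.Walk x y} {d : G.Dart}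
    (hd : p.darts.getLast? = some d) : d.toProd.2 = y := by
  have hmap := p.map_snd_darts
  have h1 : (p.darts.map fun dd => dd.toProd.2).getLast? = some d.toProd.2 := by
    rw [List.getLast?_map, hd]; rfl
  rw [hmap] at h1
  have hy : p.support.getLast? = some y := by
    rw [List.getLast?_eq_getLast p.support_ne_nil]
    exact congrArg some p.getLast_support
  have hcons := p.support_eq_cons
  cases h2 : p.support.tail with
  | nil => rw [h2] at h1; simp at h1
  | cons b l =>
    have h3 : p.support = x :: b :: l := by rw [hcons, h2]
    rw [h3, List.getLast?_cons_cons] at hy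
    rw [h2] at h1
    rw [h1] at hy
    exact (Option.some.inj hy)

lemma getLast?_mem {α : Type*} {l : List α} {a : α} (h : l.getLast? = some a) : a ∈ l := by
  have hne : l ≠ [] := by
    intro h'; rw [h'] at h; simp at h
  rw [List.getLast?_eq_getLast hne] at h
  rw [← Option.some.inj h]
  exact List.getLast_mem hne

/-- Helper: alternating list ending with a matching edge has even length. -/
lemma length_even_of_alt {M : Set (Sym2 V)} {l : List (Sym2 V)} {e : Sym2 V}
    (hl : l.getLast? = some e) (he : e ∈ M) (halt : AltEdges M l) : l.length % 2 = 0 := by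
  have hne : l ≠ [] := by intro h'; rw [h'] at hl; simp at hl
  have hpos : 0 < l.length := List.length_pos_iff.2 hne
  rw [List.getLast?_eq_getLast hne, List.getLast_eq_getElem] at hl
  have := halt (l.length - 1) (by omega)
  rw [Option.some.inj hl] at this
  have := this.1 he
  omega

/-- Helper: a matched vertex on an even-length alternating path, other than the start,
is covered by a matching edge of the path. -/
lemma mem_support_matched {G : SimpleGraph V} {M : Set (Sym2 V)} {x y : V} {P : G.Walk x y}
    (halt : AltEdges M P.edges) (heven : P.edges.length % 2 = 0)
    {z : V} (hz : z ∈ P.support) (hne : z ≠ x) :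
    ∃ e ∈ P.edges, e ∈ M ∧ z ∈ e := by
  have hz' : z ∈ P.support.tail := by
    rw [P.support_eq_cons] at hz
    rcases List.mem_cons.1 hz with h | h
    · exact absurd h hne
    · exact h
  rw [← P.map_snd_darts] at hz'
  obtain ⟨d, hd, hdz⟩ := List.mem_map.1 hz'
  obtain ⟨i, hi, hieq⟩ := List.mem_iff_getElem.1 hd
  have hlen : P.edges.length = P.darts.length := by
    show (P.darts.map _).length = _; rw [List.length_map]
  have hedge : ∀ (j : ℕ) (hj : j < P.darts.length), P.edges[j]'(by omega) = (P.darts[j]'hj).edge := by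
    intro j hj
    simp [SimpleGraph.Walk.edges]
  have hmemd : ∀ (j : ℕ) (hj : j < P.darts.length), (P.darts[j]'hj).edge ∈ P.edges := by
    intro j hj; rw [← hedge j hj]; exact List.getElem_mem _
  rcases Nat.mod_two_eq_zero_or_one i with hpar | hpar
  · -- i even: use edge i+1
    have hi1 : i + 1 < P.darts.length := by omega
    have hchain := List.isChain_iff_getElem.1 P.isChain_dartAdj_darts i (by omega)
    have hadj : (P.darts[i]'hi).toProd.2 = (P.darts[i+1]'hi1).toProd.1 := hchain
    have hM : (P.darts[i+1]'hi1).edge ∈ M := by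
      rw [← hedge (i+1) hi1]
      exact (halt (i+1) (by omega)).2 (by omega)
    refine ⟨(P.darts[i+1]'hi1).edge, hmemd (i+1) hi1, hM, ?_⟩
    have : z = (P.darts[i+1]'hi1).toProd.1 := by rw [← hadj, hieq, hdz]
    rw [this]
    show (P.darts[i+1]'hi1).toProd.1 ∈ Sym2.mk (P.darts[i+1]'hi1).toProd.1 (P.darts[i+1]'hi1).toProd.2
    rw [← Prod.mk.eta (p := (P.darts[i+1]'hi1).toProd)]
    exact Sym2.mem_mk_left _ _
  · have hM : (P.darts[i]'hi).edge ∈ M := by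
      rw [← hedge i hi]
      refine (halt i (by omega)).2 ?_
      omega
    refine ⟨(P.darts[i]'hi).edge, hmemd i hi, hM, ?_⟩
    have : z = (P.darts[i]'hi).toProd.2 := by rw [hieq, hdz]
    rw [this]
    show (P.darts[i]'hi).toProd.2 ∈ Sym2.mk (P.darts[i]'hi).toProd.1 (P.darts[i]'hi).toProd.2
    rw [← Prod.mk.eta (p := (P.darts[i]'hi).toProd)]
    exact Sym2.mem_mk_right _ _

lemma aux_main (G : SimpleGraph V) (M : Set (Sym2 V)) (hM : IsMatchingSet G M)
    (α : V) (hα : FreeVertex M α) :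
    ∀ m : ℕ, 1 ≤ m → ∀ a : ℕ → V × V, IsArcPathFn G M a m →
    ∀ P : G.Walk α (a (m - 1)).1, P.IsPath → AltEdges M P.edges →
    EndsWithArc P ((a (m - 1)).2, (a (m - 1)).1) →
    (∀ i < m - 1, ¬ Traverses P (a i)) →
    IsAltPathToArc G M α ((a 0).2, (a 0).1) := by
  classical
  intro m hm1
  induction m, hm1 using Nat.le_induction with
  | base =>
    intro a harc P hP hPalt hPend havoid
    exact ⟨P, hP, hPalt, hPend⟩
  | succ m hm ih =>
    intro a harc P hP hPalt hPend havoid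
    -- endpoint: (a (m+1-1)).1 = (a m).1 definitionally
    have harc' : IsArcPathFn G M a m :=
      ⟨fun i hi => harc.1 i (by omega),
       fun i hi j hj hij => harc.2.1 i (by omega) j (by omega) hij,
       fun i hi => harc.2.2 i (by omega)⟩
    have hmm : m - 1 + 1 = m := by omega
    have hadj := harc.2.2 (m-1) (by omega)
    rw [hmm] at hadj
    -- notation
    set u : V := (a m).1 with hu
    set v : V := (a (m-1)).2 with hv
    set w : V := (a (m-1)).1 with hwdef
    have hvwM : s(v, w) ∈ M := by
      rw [Sym2.eq_swap]; exact harc.1 (m-1) (by omega)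
    -- last dart of P
    obtain ⟨dlast, hdlast, hdlastProd⟩ := Option.map_eq_some_iff.1 hPend
    have hlastM : dlast.edge ∈ M := by
      show Sym2.mk dlast.toProd.1 dlast.toProd.2 ∈ M
      rw [hdlastProd]
      show s((a m).2, (a m).1) ∈ M
      rw [Sym2.eq_swap]
      exact harc.1 m (by omega)
    have hlastEdge : P.edges.getLast? = some dlast.edge := by
      show (P.darts.map SimpleGraph.Dart.edge).getLast? = _
      rw [List.getLast?_map, hdlast]; rfl
    have heven : P.edges.length % 2 = 0 := length_even_of_alt hlastEdge hlastM hPalt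
    by_cases hcase : s(v, w) ∈ P.edges
    · -- Case A: truncate P at w
      obtain ⟨d, hd, hdedge⟩ := List.mem_map.1 (show s(v,w) ∈ P.darts.map SimpleGraph.Dart.edge from hcase)
      have hdedge' : s(d.toProd.1, d.toProd.2) = s(v, w) := by
        exact hdedge
      have hdprod : d.toProd = (v, w) := by
        rcases Sym2.eq_iff.1 hdedge' with ⟨h1, h2⟩ | ⟨h1, h2⟩
        · exact Prod.ext h1 h2
        · -- d.toProd = (w, v) = a (m-1) : contradiction with havoid
          exfalso
          apply havoid (m-1) (by omega)
          exact ⟨d, hd, by rw [show a (m-1) = (w, v) from (Prod.mk.eta).symm]; exact Prod.ext h1 h2⟩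
      have hwsupp : w ∈ P.support := by
        rw [P.support_eq_cons]
        refine List.mem_cons.2 (Or.inr ?_)
        rw [← P.map_snd_darts]
        exact List.mem_map.2 ⟨d, hd, by rw [hdprod]⟩
      set Q := P.takeUntil w hwsupp with hQ
      set R := P.dropUntil w hwsupp with hR
      have hspec : Q.append R = P := P.take_spec hwsupp
      have hedgesP : P.edges = Q.edges ++ R.edges := by
        rw [← hspec, Walk.edges_append]
      have hdartsP : P.darts = Q.darts ++ R.darts := by
        rw [← hspec, Walk.darts_append]
      have hsuppP : P.support = Q.support ++ R.support.tail := by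
        rw [← hspec, Walk.support_append]
      have hQpath : Q.IsPath := hP.takeUntil hwsupp
      have hQalt : AltEdges M Q.edges := altEdges_prefix (hedgesP ▸ hPalt)
      -- d is in Q.darts
      have hdQ : d ∈ Q.darts := by
        rw [hdartsP] at hd
        rcases List.mem_append.1 hd with h | h
        · exact h
        · exfalso
          have hwR : w ∈ R.support.tail := by
            rw [← R.map_snd_darts]
            exact List.mem_map.2 ⟨d, h, by rw [hdprod]⟩
          have hnodup : P.support.Nodup := hP.support_nodup
          rw [hsuppP] at hnodup
          exact (List.nodup_append.1 hnodup).2.2 _ (Q.end_mem_support) _ hwR rfl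
      have hQne : Q.darts ≠ [] := fun h => by rw [h] at hdQ; simp at hdQ
      -- last dart of Q is d
      have hlastQ : Q.darts.getLast? = some d := by
        rw [List.getLast?_eq_getLast hQne]
        congr 1
        have h1 : (Q.darts.getLast hQne).toProd.2 = w :=
          snd_of_getLast?_darts (List.getLast?_eq_getLast hQne)
        have hmemP : Q.darts.getLast hQne ∈ P.darts := by
          rw [hdartsP]
          exact List.mem_append.2 (Or.inl (List.getLast_mem hQne))
        have hnodup : (P.darts.map fun dd => dd.toProd.2).Nodup := by
          rw [P.map_snd_darts]
          have := hP.support_nodup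
          rw [P.support_eq_cons] at this
          exact (List.nodup_cons.1 this).2
        exact List.inj_on_of_nodup_map hnodup hmemP hd (by rw [h1, hdprod])
      have hQend : EndsWithArc Q (v, w) := by
        show Q.darts.getLast?.map _ = _
        rw [hlastQ]
        simp [hdprod]
      have hQavoid : ∀ i < m - 1, ¬ Traverses Q (a i) := by
        intro i hi ⟨d', hd', hd'eq⟩
        exact havoid i (by omega) ⟨d', by rw [hdartsP]; exact List.mem_append.2 (Or.inl hd'), hd'eq⟩
      exact ih a harc' Q hQpath hQalt hQend hQavoid
    · -- Case B: extend P
      have hadj1 : G.Adj u v := hadj.1.symm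
      have hadj2 : G.Adj v w := (G.mem_edgeSet).1 (hM.1 hvwM)
      have hvsupp : v ∉ P.support := by
        intro hvs
        have hvne : v ≠ α := by
          intro h
          apply hα _ hvwM
          rw [← h]
          exact Sym2.mem_mk_left v w
        obtain ⟨e, he, heM, hve⟩ := mem_support_matched hPalt heven hvs hvne
        have : e = s(v, w) := by
          by_contra hne'
          exact hM.2 e heM (s(v,w)) hvwM hne' v ⟨hve, Sym2.mem_mk_left v w⟩
        exact hcase (this ▸ he)
      have hwsupp : w ∉ P.support := by
        intro hws
        have hwne : w ≠ α := by
          intro h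
          apply hα _ hvwM
          rw [← h]
          exact Sym2.mem_mk_right v w
        obtain ⟨e, he, heM, hwe⟩ := mem_support_matched hPalt heven hws hwne
        have : e = s(v, w) := by
          by_contra hne'
          exact hM.2 e heM (s(v,w)) hvwM hne' w ⟨hwe, Sym2.mem_mk_right v w⟩
        exact hcase (this ▸ he)
      set ext : G.Walk u w := Walk.cons hadj1 (Walk.cons hadj2 Walk.nil) with hext
      set P' : G.Walk α w := P.append ext with hP'
      have hP'edges : P'.edges = P.edges ++ [s(u, v), s(v, w)] := by
        rw [hP', Walk.edges_append]; rfl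
      have hP'darts : P'.darts = P.darts ++ [⟨(u,v), hadj1⟩, ⟨(v,w), hadj2⟩] := by
        rw [hP', Walk.darts_append]; rfl
      have hP'supp : P'.support = P.support ++ [v, w] := by
        rw [hP', Walk.support_append]; rfl
      have hP'path : P'.IsPath := by
        rw [Walk.isPath_def, hP'supp, List.nodup_append]
        refine ⟨hP.support_nodup, by simp [hadj2.ne], ?_⟩
        intro x hx y hx' hxy; subst hxy
        rcases List.mem_cons.1 hx' with h | h
        · exact hvsupp (h ▸ hx)
        · simp only [List.mem_singleton] at h
          exact hwsupp (h ▸ hx)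
      have hn : P.edges.length % 2 = 0 := heven
      have hP'alt : AltEdges M P'.edges := by
        intro i hi0
        have hi : i < (P.edges ++ [s(u, v), s(v, w)]).length := by rw [← hP'edges]; exact hi0
        rw [List.getElem_of_eq hP'edges hi0]
        rcases lt_trichotomy i P.edges.length with h | h | h
        · rw [List.getElem_append_left h]
          exact hPalt i h
        · rw [List.getElem_append_right (le_of_eq h.symm)]
          subst h
          simp only [Nat.sub_self]
          show s(u, v) ∈ M ↔ _
          constructor
          · intro hmem
            exfalso
            exact hadj.2 (by rw [Sym2.eq_swap] at hmem; exact hmem)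
          · intro h'; omega
        · have h2 : i = P.edges.length + 1 := by
            simp only [List.length_append, List.length_cons, List.length_nil] at hi
            omega
          rw [List.getElem_append_right (by omega)]
          subst h2
          simp only [Nat.add_sub_cancel_left]
          show s(v, w) ∈ M ↔ _
          constructor
          · intro _; omega
          · intro _; exact hvwM
      have hP'end : EndsWithArc P' (v, w) := by
        show P'.darts.getLast?.map _ = _
        rw [hP'darts, List.getLast?_append]
        simp
      have hP'avoid : ∀ i < m - 1, ¬ Traverses P' (a i) := by
        intro i hi ⟨d', hd', hd'eq⟩
        rw [hP'darts] at hd'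
        rcases List.mem_append.1 hd' with h | h
        · exact havoid i (by omega) ⟨d', h, hd'eq⟩
        · rcases List.mem_cons.1 h with h1 | h1
          · -- d' = dart (u,v): a i = (u,v), but s((a i).1,(a i).2) ∈ M while s(u,v) ∉ M
            have : s((a i).1, (a i).2) ∈ M := harc.1 i (by omega)
            rw [← hd'eq, h1] at this
            exact hadj.2 (by rw [Sym2.eq_swap] at this; exact this)
          · simp only [List.mem_singleton] at h1
            -- d' = dart (v,w): a i = (v,w), contradicts nodup with a (m-1) = (w,v)
            have hai : a i = (v, w) := by rw [← hd'eq, h1]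
            have := harc.2.1 i (by omega) (m-1) (by omega) (by omega)
            apply this
            rw [hai]
            show s(v, w) = s((a (m-1)).1, (a (m-1)).2)
            rw [Sym2.eq_swap]
      exact ih a harc' P' hP'path hP'alt hP'end hP'avoid


/-- Let `(a 0, …, a (m-1))`, `m ≥ 2`, be an alternating path of
matched arcs and let `P` be an `M`-alternating path from the free vertex `α` to
the reverse arc of `a (m-1)` traversing none of `a 0, …, a (m-2)`. Then there is
an `M`-alternating path from `α` to the reverse arc of `a 0`. -/
theorem alt_path_to_last_reverse_gives_alt_path_to_first_reverse
    [Fintype V] (G : SimpleGraph V) (M : Set (Sym2 V)) (hM : IsMatchingSet G M)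
    (α : V) (hα : FreeVertex M α)
    (a : ℕ → V × V) (m : ℕ) (hm : 2 ≤ m) (harc : IsArcPathFn G M a m)
    (P : G.Walk α (a (m - 1)).1) (hP : P.IsPath) (hPalt : AltEdges M P.edges)
    (hPend : EndsWithArc P ((a (m - 1)).2, (a (m - 1)).1))
    (havoid : ∀ i < m - 1, ¬ Traverses P (a i)) :
    IsAltPathToArc G M α ((a 0).2, (a 0).1) :=
  aux_main G M hM α hα m (by omega) a harc P hP hPalt hPend havoid
end

section
/- Let G be a finite simple graph with matching M, α a free vertex, P = (α, b_1, …, b_h) an M-alternating path from α whose traversed matched arcs, in order, are b_1, …, b_h, and Q = (c_1, …, c_t) an alternating path of matched arcs. Let j be the minimal index such that b_j or its reverse ←b_j appears among c_1, …, c_t, and suppose b_j = ←c_s for some 1 ≤ s ≤ t. Then the concatenation (α, b_1, …, b_j, ←c_{s−1}, ←c_{s−2}, …, ←c_1) is an M-alternating path from α ending with the arc ←c_1. -/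
/-!
Common definitions: matchings as sets of edges, free vertices, alternating
paths (edge membership in `M` alternates, starting with a non-matching edge),
matched arcs (directed traversals of matched edges), etc.
-/

variable {V : Type*}

open SimpleGraph in
lemma arcWalk_exists (G : SimpleGraph V) (M : Set (Sym2 V)) (hGM : M ⊆ G.edgeSet) :
    ∀ (L : List (V × V)) (a : V × V) (z : V),
      (∀ p ∈ a :: L, s(p.1, p.2) ∈ M) →
      List.Chain' (fun p q => G.Adj p.2 q.1 ∧ s(p.2, q.1) ∉ M) (a :: L) →
      ((a :: L).getLast (List.cons_ne_nil a L)).2 = z →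
      ∃ W : G.Walk a.1 z,
        W.support = (a :: L).flatMap (fun p => [p.1, p.2]) ∧
        (∀ i (h : i < W.edges.length), W.edges[i]'h ∈ M ↔ i % 2 = 0) ∧
        matchedArcs M W = a :: L ∧
        W.darts.getLast?.map SimpleGraph.Dart.toProd =
          some ((a :: L).getLast (List.cons_ne_nil a L)) := by
  intro L
  induction L with
  | nil =>
    intro a z hmem _ hz
    have hadj : G.Adj a.1 a.2 := hGM (hmem a (by simp))
    have hz' : a.2 = z := by simpa using hz
    subst hz'
    refine ⟨Walk.cons hadj Walk.nil, by simp, ?_, ?_, ?_⟩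
    · intro i h
      simp only [Walk.edges_cons, Walk.edges_nil, List.length_cons, List.length_nil] at h
      interval_cases i
      · simpa using hmem a (by simp)
    · simp [matchedArcs, hmem a (by simp)]
    · simp
  | cons q L ih =>
    intro a z hmem hch hz
    have hadj : G.Adj a.1 a.2 := hGM (hmem a (by simp))
    unfold List.Chain' at hch
    rw [List.isChain_cons_cons] at hch
    obtain ⟨⟨hconn, hconnM⟩, hch⟩ := hch
    obtain ⟨W', hsupp, halt, harcs, hlast⟩ :=
      ih q z (fun p hp => hmem p (List.mem_cons_of_mem a hp)) hch (by simpa using hz)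
    refine ⟨Walk.cons hadj (Walk.cons hconn W'), ?_, ?_, ?_, ?_⟩
    · simp [hsupp]
    · intro i h
      match i with
      | 0 => simpa using hmem a (by simp)
      | 1 => simpa using hconnM
      | (k+2) =>
        simp only [Walk.edges_cons, List.getElem_cons_succ]
        simp only [Walk.edges_cons, List.length_cons] at h
        have := halt k (by omega)
        rw [this]
        omega
    · have h1 : (⟨(a.1, a.2), hadj⟩ : G.Dart).edge ∈ M := by
        simpa [Dart.edge] using hmem a (by simp)
      have h2 : (⟨(a.2, q.1), hconn⟩ : G.Dart).edge ∉ M := by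
        simpa [Dart.edge] using hconnM
      simp only [matchedArcs, Walk.darts_cons, List.filter_cons] at harcs ⊢
      classical
      rw [if_pos (show decide ((⟨(a.1, a.2), hadj⟩ : G.Dart).edge ∈ M) = true from decide_eq_true h1),
        if_neg (show ¬ decide ((⟨(a.2, q.1), hconn⟩ : G.Dart).edge ∈ M) = true from fun h => h2 (of_decide_eq_true h))]
      simp [harcs]
    · have hne : W'.darts ≠ [] := by
        intro h0; rw [h0] at hlast; simp at hlast
      simp only [Walk.darts_cons]
      rw [show (⟨(a.1, a.2), hadj⟩ : G.Dart) :: (⟨(a.2, q.1), hconn⟩ : G.Dart) :: W'.darts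
          = ([⟨(a.1, a.2), hadj⟩, ⟨(a.2, q.1), hconn⟩] : List G.Dart) ++ W'.darts by simp,
        List.getLast?_append_of_ne_nil _ hne, hlast]
      rfl

lemma nodup_flatMap_pairs (M : Set (Sym2 V))
    (hM : ∀ e ∈ M, ∀ f ∈ M, e ≠ f → ∀ v : V, ¬(v ∈ e ∧ v ∈ f)) :
    ∀ L : List (V × V), (∀ p ∈ L, s(p.1, p.2) ∈ M) →
      (L.map fun p => s(p.1, p.2)).Nodup → (∀ p ∈ L, p.1 ≠ p.2) →
      (L.flatMap fun p => [p.1, p.2]).Nodup := by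
  intro L
  induction L with
  | nil => simp
  | cons p L ih =>
    intro hmem hnd hne
    simp only [List.flatMap_cons, List.nodup_append']
    simp only [List.map_cons, List.nodup_cons] at hnd
    refine ⟨by simp [hne p (by simp)], ih (fun q hq => hmem q (by simp [hq])) hnd.2
      (fun q hq => hne q (by simp [hq])), ?_⟩
    intro v hv hv'
    simp only [List.mem_flatMap] at hv'
    obtain ⟨q, hq, hvq⟩ := hv'
    have hpq : s(p.1, p.2) ≠ s(q.1, q.2) := by
      intro h; exact hnd.1 (h ▸ List.mem_map_of_mem hq)
    have h1 : v ∈ s(p.1, p.2) := by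
      rcases (by simpa using hv : v = p.1 ∨ v = p.2) with h | h
      · exact h ▸ Sym2.mem_mk_left p.1 p.2
      · exact h ▸ Sym2.mem_mk_right p.1 p.2
    have h2 : v ∈ s(q.1, q.2) := by
      rcases (by simpa using hvq : v = q.1 ∨ v = q.2) with h | h
      · exact h ▸ Sym2.mem_mk_left q.1 q.2
      · exact h ▸ Sym2.mem_mk_right q.1 q.2
    exact hM _ (hmem p (by simp)) _ (hmem q (by simp [hq])) hpq v ⟨h1, h2⟩


lemma head_dart_fst {G : SimpleGraph V} {u v : V} (Q : G.Walk u v) (h : Q.darts ≠ []) :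
    (Q.darts.head h).fst = u := by
  cases Q with
  | nil => simp at h
  | cons a q => simp

/-- Let `P` be an `M`-alternating path from the free vertex `α`
whose traversed matched arcs, in order, are `b 0, …, b (h-1)`, and let
`(cs 0, …, cs (t-1))` be an alternating path of matched arcs. Let `j` be the
minimal index such that `b j` or its reverse appears among the `cs`'s, and
suppose `b j = (cs s).swap`. Then the concatenation
`(α, b 0, …, b j, (cs (s-1)).swap, …, (cs 0).swap)` is an `M`-alternating path
from `α` ending with the arc `(cs 0).swap`. -/
theorem prefix_concat_reversed_arc_path_is_alt_path
    [Fintype V] (G : SimpleGraph V) (M : Set (Sym2 V)) (hM : IsMatchingSet G M)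
    (α : V) (hα : FreeVertex M α)
    {y : V} (P : G.Walk α y) (hP : P.IsPath) (hPalt : AltEdges M P.edges)
    (b : List (V × V)) (hb : matchedArcs M P = b) (hbne : b ≠ [])
    (hPend : EndsWithArc P (b.getLast hbne))
    (cs : List (V × V)) (hcs : IsArcPath G M cs)
    (j : ℕ) (hj : j < b.length)
    (hjmem : b[j]'hj ∈ cs ∨ (b[j]'hj).swap ∈ cs)
    (hjmin : ∀ i (hi : i < j),
      ¬(b[i]'(hi.trans hj) ∈ cs ∨ (b[i]'(hi.trans hj)).swap ∈ cs))
    (s : ℕ) (hs : s < cs.length)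
    (hbs : b[j]'hj = (cs[s]'hs).swap) :
    ∃ R : G.Walk α (cs[0]'(Nat.lt_of_le_of_lt (Nat.zero_le s) hs)).1,
      R.IsPath ∧ AltEdges M R.edges ∧
      matchedArcs M R = b.take (j + 1) ++ ((cs.take s).reverse.map Prod.swap) ∧
      EndsWithArc R ((cs[0]'(Nat.lt_of_le_of_lt (Nat.zero_le s) hs)).swap) := by
  classical
  obtain ⟨hMG, hMdisj⟩ := hM
  obtain ⟨hcsM, hcsnd, hcsch⟩ := hcs
  have hedgesdef : ∀ {u v : V} (Q : G.Walk u v), Q.edges = Q.darts.map SimpleGraph.Dart.edge :=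
    fun Q => rfl
  have hbF : b = (P.darts.filter fun d => decide (SimpleGraph.Dart.edge d ∈ M)).map
      SimpleGraph.Dart.toProd := by rw [← hb]; rfl
  have hF : j < (P.darts.filter fun d => decide (SimpleGraph.Dart.edge d ∈ M)).length := by
    rw [hbF] at hj; simpa using hj
  set dj : G.Dart := (P.darts.filter fun d => decide (SimpleGraph.Dart.edge d ∈ M))[j]'hF
    with hdjdef
  have hdjb : dj.toProd = b[j]'hj := by
    rw [List.getElem_of_eq hbF hj, List.getElem_map]
  have hdjP : dj ∈ P.darts := List.mem_of_mem_filter (List.getElem_mem hF)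
  have hdjM : dj.edge ∈ M := by
    have := List.of_mem_filter (List.getElem_mem hF); simpa using this
  have hfst : dj.fst ∈ P.support := P.dart_fst_mem_support_of_mem_darts hdjP
  set P₀ := P.takeUntil dj.fst hfst with hP₀def
  set Pd := P.dropUntil dj.fst hfst with hPddef
  have hspec : P₀.append Pd = P := P.take_spec hfst
  have hdartsP : P.darts = P₀.darts ++ Pd.darts := by
    conv_lhs => rw [← hspec]
    rw [SimpleGraph.Walk.darts_append]
  have hsuppP : P.support = P₀.support ++ Pd.support.tail := by
    conv_lhs => rw [← hspec]
    rw [SimpleGraph.Walk.support_append]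
  have hPsuppnd : P.support.Nodup := (SimpleGraph.Walk.isPath_def _).mp hP
  have hP₀path : P₀.IsPath := hP.takeUntil hfst
  have hP₀nd : P₀.support.Nodup := (SimpleGraph.Walk.isPath_def _).mp hP₀path
  have hfstnotin : dj.fst ∉ P₀.darts.map (·.fst) := by
    intro hmem'
    have h1 : P₀.darts.map (·.fst) ++ [dj.fst] = P₀.support :=
      P₀.map_fst_darts_append
    have h2 := List.nodup_append'.mp (by rw [h1]; exact hP₀nd)
    exact h2.2.2 hmem' (by simp)
  have hPdne : Pd.darts ≠ [] := by
    intro h0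
    rw [hdartsP, h0, List.append_nil] at hdjP
    exact hfstnotin (List.mem_map_of_mem (f := fun d : G.Dart => d.fst) hdjP)
  have hPfstnd : (P.darts.map (·.fst)).Nodup := by
    rw [P.map_fst_darts]
    exact List.Nodup.sublist (List.dropLast_sublist _) hPsuppnd
  have hhead : Pd.darts.head hPdne = dj := by
    apply List.inj_on_of_nodup_map hPfstnd
    · rw [hdartsP]; exact List.mem_append_right _ (List.head_mem hPdne)
    · exact hdjP
    · rw [head_dart_fst]
  have hPddarts : Pd.darts = dj :: Pd.darts.tail := by
    have h1 := List.cons_head_tail hPdne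
    rw [hhead] at h1
    exact h1.symm
  set A := P₀.darts.filter (fun d => decide (SimpleGraph.Dart.edge d ∈ M)) with hAdef
  have hbsplit : b = A.map SimpleGraph.Dart.toProd ++ dj.toProd ::
      (Pd.darts.tail.filter (fun d => decide (SimpleGraph.Dart.edge d ∈ M))).map
        SimpleGraph.Dart.toProd := by
    rw [hbF]
    conv_lhs => rw [hdartsP, hPddarts]
    rw [List.filter_append, List.filter_cons, if_pos (by simpa using hdjM)]
    simp [hAdef]
  have hbnd : b.Nodup := by
    have h1 : P.edges.Nodup := hP.isTrail.edges_nodup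
    rw [hedgesdef] at h1
    have h2 : P.darts.Nodup := List.Nodup.of_map _ h1
    rw [hbF]
    exact ((h2.filter _).map SimpleGraph.Dart.toProd_injective)
  have hAlen : A.length = j := by
    have hlen2 : (A.map SimpleGraph.Dart.toProd).length < b.length := by
      conv_rhs => rw [hbsplit]
      simp
    have hgj : b[(A.map SimpleGraph.Dart.toProd).length]'hlen2 = dj.toProd := by
      rw [List.getElem_of_eq hbsplit, List.getElem_append_right (Nat.le_refl _)]
      simp
    have h5 : b[j]'hj = b[(A.map SimpleGraph.Dart.toProd).length]'hlen2 :=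
      hdjb.symm.trans hgj.symm
    have := (hbnd.getElem_inj_iff).mp h5
    simpa using this.symm
  have htakeA : b.take j = A.map SimpleGraph.Dart.toProd := by
    conv_lhs => rw [hbsplit]
    rw [List.take_left' (by simpa using hAlen)]
  -- parity of the prefix length
  have hlenP : P.darts.length = P₀.darts.length + 1 + Pd.darts.tail.length := by
    rw [hdartsP]
    conv_lhs => rw [hPddarts]
    simp; omega
  have hidx : P₀.darts.length % 2 = 1 := by
    have hl : P₀.darts.length < P.edges.length := by
      rw [hedgesdef, List.length_map]; omega
    have hPdarts3 : P.darts = P₀.darts ++ dj :: Pd.darts.tail := by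
      rw [hdartsP]; congr 1
    have hPdartsj : P.darts[P₀.darts.length]'(by omega) = dj := by
      rw [List.getElem_of_eq hPdarts3, List.getElem_append_right (Nat.le_refl _)]
      simp
    have hM' : P.edges[P₀.darts.length]'hl ∈ M := by
      rw [List.getElem_of_eq (hedgesdef P), List.getElem_map, hPdartsj]; exact hdjM
    exact (hPalt _ hl).mp hM'
  -- the cs side
  have h0 : 0 < cs.length := Nat.lt_of_le_of_lt (Nat.zero_le s) hs
  set a := (cs[s]'hs).swap with hadef
  set L₀ := (cs.take s).reverse.map Prod.swap with hL₀def
  have htakes : cs.take (s+1) = cs.take s ++ [cs[s]'hs] := by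
    rw [List.take_succ]; simp [List.getElem?_eq_getElem hs]
  have haL : a :: L₀ = ((cs.take (s+1)).reverse).map Prod.swap := by
    rw [htakes, List.reverse_append]
    simp only [List.reverse_cons, List.reverse_nil, List.nil_append, List.singleton_append,
      List.map_cons]
    rfl
  have hmemtake : ∀ p ∈ a :: L₀, ∃ q ∈ cs.take (s+1), p = q.swap := by
    intro p hp
    rw [haL] at hp
    simp only [List.mem_map, List.mem_reverse] at hp
    obtain ⟨q, hq, rfl⟩ := hp
    exact ⟨q, hq, rfl⟩
  have hmem_aL : ∀ p ∈ a :: L₀, s(p.1, p.2) ∈ M := by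
    intro p hp
    obtain ⟨q, hq, rfl⟩ := hmemtake p hp
    have := hcsM q (List.mem_of_mem_take hq)
    simpa [Sym2.eq_swap] using this
  have hch_aL : List.Chain' (fun p q => G.Adj p.2 q.1 ∧ s(p.2, q.1) ∉ M) (a :: L₀) := by
    rw [haL]
    unfold List.Chain'
    rw [List.isChain_map, List.isChain_reverse]
    refine List.IsChain.imp ?_ (hcsch.take (s+1))
    intro x y hxy
    obtain ⟨h1, h2⟩ := hxy
    simp only [flip, Prod.fst_swap, Prod.snd_swap]
    exact ⟨h1.symm, by rwa [Sym2.eq_swap]⟩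
  have hlenaL : (a :: L₀).length = s + 1 := by
    simp only [List.length_cons, hL₀def, List.length_map, List.length_reverse,
      List.length_take]
    omega
  have hlast_aL : (a :: L₀).getLast (List.cons_ne_nil _ _) = (cs[0]'h0).swap := by
    rw [List.getLast_eq_getElem, List.getElem_of_eq haL, List.getElem_map,
      List.getElem_reverse, List.getElem_take]
    have hidx0 : (cs.take (s+1)).length - 1 - ((a :: L₀).length - 1) = 0 := by
      simp only [List.length_take, hlenaL]
      omega
    simp only [hidx0]
  obtain ⟨W, hWsupp, hWalt, hWarcs, hWlast⟩ :=
    arcWalk_exists G M hMG L₀ a (cs[0]'h0).1 hmem_aL hch_aL (by rw [hlast_aL]; rfl)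
  have hbj : b[j]'hj = a := hbs
  have hdja : dj.toProd = a := hdjb.trans hbj
  have hafst : a.1 = dj.fst := by rw [← hdja]
  set W' := W.copy hafst rfl with hW'def
  have hW'supp : W'.support = W.support := by simp [hW'def]
  have hW'darts : W'.darts = W.darts := by simp [hW'def]
  have hW'edges : W'.edges = W.edges := by simp [hW'def]
  -- nodup of W.support
  have hedgemap : ((a :: L₀).map fun p => s(p.1, p.2)).Nodup := by
    rw [haL]
    have h1 : (((cs.take (s+1)).reverse).map Prod.swap).map (fun p => s(p.1, p.2))
        = ((cs.take (s+1)).reverse).map (fun p => s(p.1, p.2)) := by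
      rw [List.map_map]
      exact List.map_congr_left (fun p _ => by simp [Sym2.eq_swap])
    rw [h1, List.map_reverse, List.nodup_reverse, List.map_take]
    exact List.Nodup.sublist (List.take_sublist _ _) hcsnd
  have hWnd : W.support.Nodup := by
    rw [hWsupp]
    exact nodup_flatMap_pairs M hMdisj _ hmem_aL hedgemap
      (fun p hp => (hMG (hmem_aL p hp)).ne)
  have hWside : ∀ v ∈ W.support, ∃ q ∈ cs.take (s+1), v ∈ s(q.1, q.2) := by
    intro v hv
    rw [hWsupp] at hv
    rw [List.mem_flatMap] at hv
    obtain ⟨p, hp, hvp⟩ := hv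
    obtain ⟨q, hq, rfl⟩ := hmemtake p hp
    refine ⟨q, hq, ?_⟩
    rcases (by simpa using hvp : v = q.2 ∨ v = q.1) with h | h
    · exact h ▸ Sym2.mem_mk_right q.1 q.2
    · exact h ▸ Sym2.mem_mk_left q.1 q.2
  have hsndPd : dj.snd ∈ Pd.support.tail := by
    rw [← Pd.map_snd_darts, hPddarts]
    simp
  have hsndnotP₀ : dj.snd ∉ P₀.support := by
    intro hmem'
    have h2 := List.nodup_append'.mp (by rw [← hsuppP]; exact hPsuppnd)
    exact h2.2.2 hmem' hsndPd
  -- the extended prefix walk P₀ plus the dart dj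
  have hdjeq : (⟨(dj.fst, dj.snd), dj.adj⟩ : G.Dart) = dj := SimpleGraph.Dart.ext _ _ rfl
  have hP₁darts : (P₀.concat dj.adj).darts = P₀.darts ++ [dj] := by
    rw [SimpleGraph.Walk.darts_concat, hdjeq, List.concat_eq_append]
  have hP₁supp : (P₀.concat dj.adj).support = P₀.support ++ [dj.snd] := by
    rw [SimpleGraph.Walk.support_concat]
  have hPdarts3 : P.darts = P₀.darts ++ dj :: Pd.darts.tail := by
    rw [hdartsP]; congr 1
  have hDlen : (P₀.darts ++ [dj]).length = P₀.darts.length + 1 := by simp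
  have hP₁altdarts : ∀ k (hk : k < P₀.darts.length + 1),
      ((P₀.darts ++ [dj])[k]'(by rw [hDlen]; omega)).edge ∈ M ↔ k % 2 = 1 := by
    intro k hk
    have hk' : k < P.edges.length := by
      rw [hedgesdef, List.length_map, hlenP]; omega
    have heq : P.edges[k]'hk' = ((P₀.darts ++ [dj])[k]'(by rw [hDlen]; omega)).edge := by
      rw [List.getElem_of_eq (hedgesdef P), List.getElem_map]
      congr 1
      rw [List.getElem_of_eq hPdarts3]
      rcases Nat.lt_or_ge k P₀.darts.length with h | h
      · rw [List.getElem_append_left h, List.getElem_append_left h]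
      · have hk0 : k = P₀.darts.length := by omega
        subst hk0
        rw [List.getElem_append_right (Nat.le_refl _),
          List.getElem_append_right (Nat.le_refl _)]
        simp
    rw [← heq]
    exact hPalt k hk'
  have hbitoM : ∀ i (hi : i < b.length), s((b[i]'hi).1, (b[i]'hi).2) ∈ M := by
    intro i hi
    have hi' : i < (P.darts.filter fun d => decide (SimpleGraph.Dart.edge d ∈ M)).length := by
      rw [hbF] at hi; simpa using hi
    have hbi : b[i]'hi = ((P.darts.filter fun d =>
        decide (SimpleGraph.Dart.edge d ∈ M))[i]'hi').toProd := by
      rw [List.getElem_of_eq hbF, List.getElem_map]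
    rw [hbi]
    have h6 := List.of_mem_filter (List.getElem_mem hi')
    exact of_decide_eq_true h6
  have hP₀side : ∀ v ∈ P₀.support,
      v = α ∨ (∃ i, ∃ hi : i < j, v ∈ s((b[i]'(hi.trans hj)).1, (b[i]'(hi.trans hj)).2)) ∨
        v = dj.fst ∨ v = dj.snd := by
    have key : ∀ d ∈ P₀.darts ++ [dj], SimpleGraph.Dart.edge d ∈ M →
        ∀ v : V, v = d.fst ∨ v = d.snd →
        (∃ i, ∃ hi : i < j, v ∈ s((b[i]'(hi.trans hj)).1, (b[i]'(hi.trans hj)).2)) ∨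
          v = dj.fst ∨ v = dj.snd := by
      intro d hd hdM v hv
      rcases List.mem_append.mp hd with hd0 | hd1
      · left
        have hdA : d ∈ A := List.mem_filter.mpr ⟨hd0, by simpa using hdM⟩
        have hmem2 : d.toProd ∈ b.take j := by
          rw [htakeA]; exact List.mem_map_of_mem hdA
        obtain ⟨i, hilen, hib⟩ := List.mem_iff_getElem.mp hmem2
        have hij : i < j := by
          rw [List.length_take] at hilen; omega
        refine ⟨i, hij, ?_⟩
        have hbi : b[i]'(hij.trans hj) = d.toProd := by
          rw [← hib, List.getElem_take]
        rw [hbi]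
        rcases hv with h | h
        · exact h ▸ Sym2.mem_mk_left _ _
        · exact h ▸ Sym2.mem_mk_right _ _
      · right
        have hddj : d = dj := by simpa using hd1
        rw [hddj] at hv
        exact hv
    intro v hv
    have hv1 : v ∈ (P₀.concat dj.adj).support := by
      rw [hP₁supp]; exact List.mem_append_left _ hv
    rw [← SimpleGraph.Walk.cons_map_snd_darts] at hv1
    rcases List.mem_cons.mp hv1 with h | h
    · exact Or.inl h
    · right
      rw [hP₁darts] at h
      obtain ⟨k, hk, hvk⟩ := List.mem_iff_getElem.mp h
      rw [List.getElem_map] at hvk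
      have hklen : k < P₀.darts.length + 1 := by
        rw [List.length_map, hDlen] at hk; exact hk
      by_cases hkM : ((P₀.darts ++ [dj])[k]'(by rw [hDlen]; omega)).edge ∈ M
      · exact key _ (List.getElem_mem _) hkM v (Or.inr hvk.symm)
      · have hk2 : k % 2 = 0 := by
          rcases Nat.mod_two_eq_zero_or_one k with h2 | h2
          · exact h2
          · exact absurd ((hP₁altdarts k hklen).mpr h2) hkM
        have hkn : k + 1 < P₀.darts.length + 1 := by omega
        have hchain : ((P₀.darts ++ [dj])[k]'(by rw [hDlen]; omega)).snd
            = ((P₀.darts ++ [dj])[k+1]'(by rw [hDlen]; omega)).fst := by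
          have hc : List.Chain' G.DartAdj (P₀.darts ++ [dj]) := by
            rw [← hP₁darts]; exact SimpleGraph.Walk.isChain_dartAdj_darts _
          have h7 := List.isChain_iff_getElem.mp hc k (by rw [hDlen]; omega)
          exact h7
        have hk1M : ((P₀.darts ++ [dj])[k+1]'(by rw [hDlen]; omega)).edge ∈ M :=
          (hP₁altdarts (k+1) hkn).mpr (by omega)
        refine key _ (List.getElem_mem _) hk1M v (Or.inl ?_)
        rw [← hvk, hchain]
  have hdisj : ∀ v ∈ P₀.support, v ∈ W.support → v = dj.fst := by
    intro v hv hvW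
    obtain ⟨q, hq, hvq⟩ := hWside v hvW
    have hqM : s(q.1, q.2) ∈ M := hcsM q (List.mem_of_mem_take hq)
    rcases hP₀side v hv with rfl | ⟨i, hij, hvb⟩ | h | rfl
    · exact absurd hvq (hα _ hqM)
    · exfalso
      have hbiM := hbitoM i (hij.trans hj)
      have heq2 : s((b[i]'(hij.trans hj)).1, (b[i]'(hij.trans hj)).2) = s(q.1, q.2) := by
        by_contra hne'
        exact hMdisj _ hbiM _ hqM hne' v ⟨hvb, hvq⟩
      have hmemcs : b[i]'(hij.trans hj) ∈ cs ∨ (b[i]'(hij.trans hj)).swap ∈ cs := by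
        rcases Sym2.eq_iff.mp heq2 with ⟨h1, h2⟩ | ⟨h1, h2⟩
        · left
          have : b[i]'(hij.trans hj) = q := Prod.ext h1 h2
          rw [this]; exact List.mem_of_mem_take hq
        · right
          have : (b[i]'(hij.trans hj)).swap = q := Prod.ext (by simpa using h2) (by simpa using h1)
          rw [this]; exact List.mem_of_mem_take hq
      exact hjmin i hij hmemcs
    · exact h
    · exact absurd hv hsndnotP₀
  have hRd : (P₀.append W').darts = P₀.darts ++ W.darts := by
    rw [SimpleGraph.Walk.darts_append, hW'darts]
  have hRe : (P₀.append W').edges = P₀.edges ++ W.edges := by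
    rw [SimpleGraph.Walk.edges_append, hW'edges]
  have hP₀elen : P₀.edges.length = P₀.darts.length := by rw [hedgesdef, List.length_map]
  refine ⟨P₀.append W', ?_, ?_, ?_, ?_⟩
  · -- IsPath
    rw [SimpleGraph.Walk.isPath_def, SimpleGraph.Walk.support_append, hW'supp,
      List.nodup_append']
    refine ⟨hP₀nd, List.Nodup.sublist (List.tail_sublist _) hWnd, ?_⟩
    intro v hv hvt
    have hvW : v ∈ W.support := List.mem_of_mem_tail hvt
    have hvd : v = dj.fst := hdisj v hv hvW
    have hnotail : a.1 ∉ W.support.tail := by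
      have h3 : (a.1 :: W.support.tail).Nodup := by
        rw [← W.support_eq_cons]; exact hWnd
      exact (List.nodup_cons.mp h3).1
    have hvd2 : v = a.1 := hvd.trans hafst.symm
    exact hnotail (hvd2 ▸ hvt)
  · -- AltEdges
    intro i hilen
    have hilen2 : i < (P₀.edges ++ W.edges).length := by rw [← hRe]; exact hilen
    have hgi : (P₀.append W').edges[i]'hilen = (P₀.edges ++ W.edges)[i]'hilen2 := by
      rw [List.getElem_of_eq hRe]
    rw [hgi]
    rcases Nat.lt_or_ge i P₀.edges.length with hi0 | hi0
    · rw [List.getElem_append_left hi0]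
      have hPe : P.edges = P₀.edges ++ Pd.edges := by
        conv_lhs => rw [← hspec]
        rw [SimpleGraph.Walk.edges_append]
      have hi1 : i < P.edges.length := by rw [hPe, List.length_append]; omega
      have heq3 : P.edges[i]'hi1 = P₀.edges[i]'hi0 := by
        rw [List.getElem_of_eq hPe, List.getElem_append_left hi0]
      rw [← heq3]
      exact hPalt i hi1
    · rw [List.getElem_append_right hi0]
      rw [hWalt (i - P₀.edges.length) (by rw [List.length_append] at hilen2; omega)]
      rw [hP₀elen] at hi0
      omega
  · -- matchedArcs
    simp only [matchedArcs] at hWarcs ⊢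
    rw [hRd, List.filter_append, List.map_append, hWarcs, ← hAdef, ← htakeA]
    have hbt : b.take (j+1) = b.take j ++ [a] := by
      rw [List.take_succ]
      simp [List.getElem?_eq_getElem hj, hbj]
    rw [hbt, List.append_assoc]
    rfl
  · -- EndsWithArc
    show ((P₀.append W').darts.getLast?).map SimpleGraph.Dart.toProd = some ((cs[0]'h0).swap)
    have hWdne : W.darts ≠ [] := by
      intro h0; rw [h0] at hWlast; simp at hWlast
    rw [hRd, List.getLast?_append_of_ne_nil _ hWdne, hWlast, hlast_aL]
end

section
/- Let G be a finite simple graph with matching M, α a free vertex, P = (α, b_1, …, b_h) an M-alternating path from α whose traversed matched arcs, in order, are b_1, …, b_h, and Q = (c_1, …, c_t) an alternating path of matched arcs. Let j be the minimal index such that b_j or its reverse ←b_j appears among c_1, …, c_t, and suppose b_j = c_s for some 1 ≤ s ≤ t (same direction). Then the concatenation (α, b_1, …, b_j, c_{s+1}, …, c_t) is an M-alternating path from α ending with the arc c_t. -/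
/-!
Common definitions: matchings as sets of edges, free vertices, alternating
paths (edge membership in `M` alternates, starting with a non-matching edge),
matched arcs (directed traversals of matched edges), etc.
-/

variable {V : Type*}

section lists
variable {β : Type*} (p : β → Bool)

private theorem oddFilter_take :
    ∀ (l : List β), (∀ i (h : i < l.length), (p (l[i]'h) = true ↔ i % 2 = 1)) →
      ∀ k, (l.take (2*k)).filter p = (l.filter p).take k
  | [], _, k => by simp
  | [x], hp, k => by
      have hx : p x = false := by
        have := hp 0 (by simp); simp at this; simpa using this
      cases k <;> simp [hx, List.filter]
      intro a ha
      rw [List.mem_singleton.mp (List.mem_of_mem_take ha)]; exact hx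
  | x :: y :: tl, hp, 0 => by simp
  | x :: y :: tl, hp, (k+1) => by
      have hx : p x = false := by
        have := hp 0 (by simp); simp at this; simpa using this
      have hy : p y = true := by
        have := hp 1 (by simp); simpa using this
      have htl : ∀ i (h : i < tl.length), (p (tl[i]'h) = true ↔ i % 2 = 1) := by
        intro i h
        have := hp (i+2) (by simpa using h)
        simpa [Nat.add_mod_right] using this
      have heq : 2 * (k+1) = (2*k + 1) + 1 := by ring
      rw [heq]
      simp [List.filter_cons, hx, hy, List.take_succ_cons]
      rw [oddFilter_take tl htl k]

private theorem oddFilter_getElem? :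
    ∀ (l : List β), (∀ i (h : i < l.length), (p (l[i]'h) = true ↔ i % 2 = 1)) →
      ∀ k, (l.filter p)[k]? = l[2*k+1]?
  | [], _, k => by simp
  | [x], hp, k => by
      have hx : p x = false := by
        have := hp 0 (by simp); simp at this; simpa using this
      rw [List.getElem?_eq_none (by simp [List.filter_cons, hx]),
        List.getElem?_eq_none (by simp)]
  | x :: y :: tl, hp, k => by
      have hx : p x = false := by
        have := hp 0 (by simp); simp at this; simpa using this
      have hy : p y = true := by
        have := hp 1 (by simp); simpa using this
      have htl : ∀ i (h : i < tl.length), (p (tl[i]'h) = true ↔ i % 2 = 1) := by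
        intro i h
        have := hp (i+2) (by simpa using h)
        simpa [Nat.add_mod_right] using this
      cases k with
      | zero => simp [List.filter_cons, hx, hy]
      | succ k =>
          have h2 : 2*(k+1)+1 = (2*k+1) + 1 + 1 := by ring
          rw [h2]
          simp [List.filter_cons, hx, hy]
          exact oddFilter_getElem? tl htl k

private theorem oddFilter_length :
    ∀ (l : List β), (∀ i (h : i < l.length), (p (l[i]'h) = true ↔ i % 2 = 1)) →
      (l.filter p).length = l.length / 2
  | [], _ => by simp
  | [x], hp => by
      have hx : p x = false := by
        have := hp 0 (by simp); simp at this; simpa using this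
      simp [List.filter_cons, hx]
  | x :: y :: tl, hp => by
      have hx : p x = false := by
        have := hp 0 (by simp); simp at this; simpa using this
      have hy : p y = true := by
        have := hp 1 (by simp); simpa using this
      have htl : ∀ i (h : i < tl.length), (p (tl[i]'h) = true ↔ i % 2 = 1) := by
        intro i h
        have := hp (i+2) (by simpa using h)
        simpa [Nat.add_mod_right] using this
      simp [List.filter_cons, hx, hy]
      rw [oddFilter_length tl htl]
      omega

end lists

section alt
variable {M : Set (Sym2 V)}

private theorem altEdges_nil : AltEdges M [] := by intro i h; simp at h

private theorem altEdges_cons2 {e f : Sym2 V} {l : List (Sym2 V)}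
    (he : e ∉ M) (hf : f ∈ M) (hl : AltEdges M l) : AltEdges M (e :: f :: l) := by
  intro i h
  match i with
  | 0 => simpa using he
  | 1 => simpa using hf
  | (i+2) =>
      have := hl i (by simpa using h)
      simpa [Nat.add_mod_right] using this

private theorem altEdges_append {l1 l2 : List (Sym2 V)} (hev : l1.length % 2 = 0)
    (h1 : AltEdges M l1) (h2 : AltEdges M l2) : AltEdges M (l1 ++ l2) := by
  intro i h
  rcases lt_or_ge i l1.length with hi | hi
  · rw [List.getElem_append_left hi]; exact h1 i hi
  · rw [List.getElem_append_right hi]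
    have := h2 (i - l1.length) (by simp at h; omega)
    rw [this]; omega

private theorem altEdges_take {l : List (Sym2 V)} (h : AltEdges M l) (n : ℕ) :
    AltEdges M (l.take n) := by
  intro i hi
  rw [List.getElem_take]
  exact h i (lt_of_lt_of_le hi (by simpa using List.length_take_le n l))

end alt

section arcs
variable {G : SimpleGraph V} {M : Set (Sym2 V)}

/-- auxiliary chain relation -/
def Rlink (G : SimpleGraph V) (M : Set (Sym2 V)) (x a : V × V) : Prop :=
  (G.Adj x.2 a.1 ∧ s(x.2, a.1) ∉ M) ∧ G.Adj a.1 a.2 ∧ s(a.1, a.2) ∈ M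

def arcDarts : V → List (V × V) → List (V × V)
  | _, [] => []
  | v, a :: L => (v, a.1) :: (a.1, a.2) :: arcDarts a.2 L

private theorem chain_snd {a : V × V} {L : List (V × V)}
    (h : List.Chain (Rlink G M) a L) : List.Chain (Rlink G M) (a.2, a.2) L := by
  cases L with
  | nil => exact List.Chain.nil
  | cons b L' => unfold List.Chain at h ⊢; rw [List.chain_cons] at h ⊢; exact h

private theorem arcDarts_map_snd :
    ∀ (v : V) (L : List (V × V)),
      (arcDarts v L).map Prod.snd = L.flatMap fun a => [a.1, a.2]
  | _, [] => by simp [arcDarts]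
  | v, a :: L => by simp [arcDarts, arcDarts_map_snd a.2 L]

private theorem arcDarts_alt :
    ∀ (v : V) (L : List (V × V)), List.Chain (Rlink G M) (v, v) L →
      AltEdges M ((arcDarts v L).map fun q => s(q.1, q.2))
  | _, [], _ => altEdges_nil
  | v, a :: L, h => by
      unfold List.Chain at h
      rw [List.chain_cons] at h
      obtain ⟨⟨⟨_, hnm⟩, _, hm⟩, hc⟩ := h
      simpa [arcDarts] using altEdges_cons2 hnm hm (arcDarts_alt a.2 L (chain_snd hc))

private theorem arcDarts_filter (f : V × V → Bool)
    (hf : ∀ q, f q = true ↔ s(q.1, q.2) ∈ M) :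
    ∀ (v : V) (L : List (V × V)), List.Chain (Rlink G M) (v, v) L →
      (arcDarts v L).filter f = L
  | _, [], _ => by simp [arcDarts]
  | v, a :: L, h => by
      unfold List.Chain at h
      rw [List.chain_cons] at h
      obtain ⟨⟨⟨_, hnm⟩, _, hm⟩, hc⟩ := h
      have h1 : f (v, a.1) = false := by
        rw [← Bool.not_eq_true, hf]; exact hnm
      have h2 : f (a.1, a.2) = true := (hf _).mpr hm
      simp [arcDarts, List.filter_cons, h1, h2, arcDarts_filter f hf a.2 L (chain_snd hc)]

private theorem arcDarts_getLast? :
    ∀ (v : V) (L : List (V × V)) (_ : L ≠ []),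
      (arcDarts v L).getLast? = L.getLast?
  | v, [a], _ => by simp [arcDarts]
  | v, a :: b :: L, _ => by
      rw [show arcDarts v (a :: b :: L) = (v, a.1) :: (a.1, a.2) :: arcDarts a.2 (b :: L) from rfl]
      rw [List.getLast?_cons_cons, List.getLast?_cons_cons]
      have := arcDarts_getLast? a.2 (b :: L) (by simp)
      rw [show arcDarts a.2 (b :: L) = (a.2, b.1) :: (b.1, b.2) :: arcDarts b.2 L from rfl] at this ⊢
      rw [List.getLast?_cons_cons] at this
      rw [List.getLast?_cons_cons]
      exact this

private theorem exists_arc_walk :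
    ∀ (v : V) (L : List (V × V)), List.Chain (Rlink G M) (v, v) L →
      ∃ Q : G.Walk v ((L.getLastD (v, v)).2),
        Q.darts.map SimpleGraph.Dart.toProd = arcDarts v L
  | v, [], _ => ⟨SimpleGraph.Walk.nil, by simp [arcDarts]; rfl⟩
  | v, a :: L, h => by
      unfold List.Chain at h
      rw [List.chain_cons] at h
      obtain ⟨⟨⟨hadj1, _⟩, hadj2, _⟩, hc⟩ := h
      obtain ⟨Q', hQ'⟩ := exists_arc_walk a.2 L (chain_snd hc)
      have heq : ((L.getLastD (a.2, a.2)).2) = (((a :: L).getLastD (v, v)).2) := by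
        cases L <;> rfl
      refine ⟨SimpleGraph.Walk.cons hadj1 (SimpleGraph.Walk.cons hadj2 (Q'.copy rfl heq)), ?_⟩
      simp [arcDarts, SimpleGraph.Walk.darts_copy, hQ']

end arcs

section prefixwalk
variable {G : SimpleGraph V}

private theorem exists_prefix_walk {x y : V} (p : G.Walk x y) :
    ∀ (n : ℕ) (h : n < p.darts.length),
      ∃ q : G.Walk x ((p.darts[n]'h).toProd.2), q.darts = p.darts.take (n+1) := by
  induction p with
  | nil => intro n h; simp at h
  | cons a p' ih =>
      intro n h
      cases n with
      | zero => exact ⟨SimpleGraph.Walk.cons a SimpleGraph.Walk.nil, by simp⟩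
      | succ n =>
          obtain ⟨q', hq'⟩ := ih n (by simpa using h)
          exact ⟨SimpleGraph.Walk.cons a q', by simp [hq']⟩

end prefixwalk

section helpers2

open SimpleGraph List

private theorem matchedArcs_eq_filter {G : SimpleGraph V} (M : Set (Sym2 V)) {x y : V}
    (p : G.Walk x y) (f : G.Dart → Bool) (hf : ∀ d, f d = true ↔ d.edge ∈ M) :
    matchedArcs M p = (p.darts.filter f).map SimpleGraph.Dart.toProd := by
  classical
  unfold matchedArcs
  congr 1
  apply List.filter_congr
  intro d _
  rw [Bool.eq_iff_iff, hf, decide_eq_true_iff]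

private theorem chain_and {α : Type*} {R : α → α → Prop} {Q : α → Prop} :
    ∀ {a : α} {l : List α}, List.Chain R a l → (∀ x ∈ l, Q x) →
      List.Chain (fun x y => R x y ∧ Q y) a l
  | _, [], _, _ => List.Chain.nil
  | a, b :: l, h, hq => by
      unfold List.Chain at h ⊢
      rw [List.chain_cons] at h ⊢
      exact ⟨⟨h.1, hq b (by simp)⟩, chain_and h.2 (fun x hx => hq x (by simp [hx]))⟩

private theorem flatMap_pairs_nodup {M : Set (Sym2 V)}
    (hMdisj : ∀ e ∈ M, ∀ f ∈ M, e ≠ f → ∀ v : V, ¬(v ∈ e ∧ v ∈ f)) :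
    ∀ (L : List (V × V)), (∀ a ∈ L, s(a.1, a.2) ∈ M) → (∀ a ∈ L, a.1 ≠ a.2) →
      (L.map fun a => s(a.1, a.2)).Nodup → (L.flatMap fun a => [a.1, a.2]).Nodup
  | [], _, _, _ => by simp
  | a :: L, hm, hne, hnd => by
      rw [List.map_cons, List.nodup_cons] at hnd
      obtain ⟨hannot, hndL⟩ := hnd
      have hrec := flatMap_pairs_nodup hMdisj L (fun x hx => hm x (by simp [hx]))
        (fun x hx => hne x (by simp [hx])) hndL
      have hkey : ∀ w, (w = a.1 ∨ w = a.2) → w ∉ L.flatMap (fun a => [a.1, a.2]) := by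
        intro w hwmem hwfl
        rw [List.mem_flatMap] at hwfl
        obtain ⟨x, hxL, hwx⟩ := hwfl
        have hex : s(x.1, x.2) ∈ M := hm x (by simp [hxL])
        have hea : s(a.1, a.2) ∈ M := hm a (by simp)
        have hne2 : s(a.1, a.2) ≠ s(x.1, x.2) := by
          intro hem
          exact hannot (hem ▸ List.mem_map.mpr ⟨x, hxL, rfl⟩)
        refine hMdisj _ hea _ hex hne2 w ⟨?_, ?_⟩
        · rcases hwmem with h | h <;> rw [h]
          · exact Sym2.mem_mk_left _ _
          · exact Sym2.mem_mk_right _ _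
        · simp only [List.mem_cons, List.mem_singleton, List.not_mem_nil, or_false] at hwx
          rcases hwx with h | h <;> rw [h]
          · exact Sym2.mem_mk_left _ _
          · exact Sym2.mem_mk_right _ _
      show (a.1 :: a.2 :: L.flatMap fun a => [a.1, a.2]).Nodup
      rw [List.nodup_cons, List.nodup_cons]
      refine ⟨?_, hkey a.2 (Or.inr rfl), hrec⟩
      simp only [List.mem_cons, not_or]
      exact ⟨hne a (by simp), hkey a.1 (Or.inl rfl)⟩

private theorem getLast?_take_succ {α : Type*} (l : List α) (n : ℕ) (h : n < l.length) :
    (l.take (n+1)).getLast? = some (l[n]'h) := by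
  rw [List.getLast?_eq_getElem?]
  have hlen : (l.take (n+1)).length = n + 1 := by simp [List.length_take]; omega
  rw [hlen]
  simp only [Nat.add_sub_cancel]
  rw [List.getElem?_take, if_pos (by omega), List.getElem?_eq_getElem h]

end helpers2

/-- Let `P` be an `M`-alternating path from the free vertex `α`
whose traversed matched arcs, in order, are `b 0, …, b (h-1)`, and let
`(cs 0, …, cs (t-1))` be an alternating path of matched arcs. Let `j` be the
minimal index such that `b j` or its reverse appears among the `cs`'s, and
suppose `b j = cs s` (same direction). Then the concatenation
`(α, b 0, …, b j, cs (s+1), …, cs (t-1))` is an `M`-alternating path from `α`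
ending with the arc `cs (t-1)`. -/
theorem prefix_concat_arc_path_is_alt_path
    [Fintype V] (G : SimpleGraph V) (M : Set (Sym2 V)) (hM : IsMatchingSet G M)
    (α : V) (hα : FreeVertex M α)
    {y : V} (P : G.Walk α y) (hP : P.IsPath) (hPalt : AltEdges M P.edges)
    (b : List (V × V)) (hb : matchedArcs M P = b) (hbne : b ≠ [])
    (hPend : EndsWithArc P (b.getLast hbne))
    (cs : List (V × V)) (hcs : IsArcPath G M cs) (hcsne : cs ≠ [])
    (j : ℕ) (hj : j < b.length)
    (hjmem : b[j]'hj ∈ cs ∨ (b[j]'hj).swap ∈ cs)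
    (hjmin : ∀ i (hi : i < j),
      ¬(b[i]'(hi.trans hj) ∈ cs ∨ (b[i]'(hi.trans hj)).swap ∈ cs))
    (s : ℕ) (hs : s < cs.length)
    (hbs : b[j]'hj = cs[s]'hs) :
    ∃ R : G.Walk α (cs.getLast hcsne).2,
      R.IsPath ∧ AltEdges M R.edges ∧
      matchedArcs M R = b.take (j + 1) ++ cs.drop (s + 1) ∧
      EndsWithArc R (cs.getLast hcsne) := by
  classical
  open SimpleGraph List in
  obtain ⟨hMsub, hMdisj⟩ := hM
  obtain ⟨hcsM, hcsnd, hcschain⟩ := hcs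
  set g : G.Dart → Bool := fun d => decide (d.edge ∈ M) with hgdef
  have hg : ∀ d : G.Dart, g d = true ↔ d.edge ∈ M := by
    intro d; rw [hgdef]; exact decide_eq_true_iff
  have hbfil : (P.darts.filter g).map SimpleGraph.Dart.toProd = b := by
    rw [← matchedArcs_eq_filter M P g hg]; exact hb
  have hPedges : P.edges = P.darts.map SimpleGraph.Dart.edge := rfl
  have hgP : ∀ i (h : i < P.darts.length), g (P.darts[i]'h) = true ↔ i % 2 = 1 := by
    intro i h
    rw [hg]
    have h' : i < P.edges.length := by rw [hPedges]; simpa using h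
    have h2 := hPalt i h'
    simp only [hPedges, List.getElem_map] at h2
    exact h2
  have hblen : b.length = P.darts.length / 2 := by
    rw [← hbfil, List.length_map]; exact oddFilter_length g P.darts hgP
  have hdlen : 2*j + 2 ≤ P.darts.length := by omega
  have hbj' : ∀ i (hi : i < b.length) (h2 : 2*i+1 < P.darts.length),
      b[i]'hi = (P.darts[2*i+1]'h2).toProd := by
    intro i hi h2
    have h1 : b[i]? = (P.darts[2*i+1]?).map SimpleGraph.Dart.toProd := by
      conv_lhs => rw [← hbfil]
      rw [List.getElem?_map, oddFilter_getElem? g P.darts hgP i]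
    rw [List.getElem?_eq_getElem hi, List.getElem?_eq_getElem h2] at h1
    simpa using h1
  have hbM : ∀ i (hi : i < b.length), s((b[i]'hi).1, (b[i]'hi).2) ∈ M := by
    intro i hi
    have h2 : 2*i+1 < P.darts.length := by omega
    rw [hbj' i hi h2]
    have h3 := (hgP (2*i+1) h2).mpr (by omega)
    rw [hg] at h3
    exact h3
  have hs2 : 2*j+1 < P.darts.length := by omega
  obtain ⟨P1, hP1darts⟩ := exists_prefix_walk P (2*j+1) hs2
  have hvw : (P.darts[2*j+1]'hs2).toProd.2 = (cs[s]'hs).2 := by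
    rw [← hbj' j hj hs2, hbs]
  set v : V := (cs[s]'hs).2 with hvdef
  set L : List (V × V) := cs.drop (s+1) with hLdef
  -- the chain hypothesis for the arc walk
  have hchainL : List.Chain (Rlink G M) (v, v) L := by
    have h1 : List.Chain' (fun a c => G.Adj a.2 c.1 ∧ s(a.2, c.1) ∉ M) (cs.drop s) :=
      hcschain.suffix (List.drop_suffix s cs)
    rw [List.drop_eq_getElem_cons hs] at h1
    have h2 : List.Chain (fun a c => G.Adj a.2 c.1 ∧ s(a.2, c.1) ∉ M) (cs[s]'hs) L := h1
    have h3 : List.Chain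
        (fun x y => (G.Adj x.2 y.1 ∧ s(x.2, y.1) ∉ M) ∧ (G.Adj y.1 y.2 ∧ s(y.1, y.2) ∈ M))
        (cs[s]'hs) L := by
      refine chain_and h2 (fun a ha => ?_)
      have hm : s(a.1, a.2) ∈ M := hcsM a (List.mem_of_mem_drop ha)
      exact ⟨(G.mem_edgeSet).mp (hMsub hm), hm⟩
    exact chain_snd h3
  obtain ⟨Q, hQdarts⟩ := exists_arc_walk v L hchainL
  have hLlast : ∀ (_ : L ≠ []), L.getLast? = some (cs.getLast hcsne) := by
    intro hL
    have h1 : cs.getLast? = L.getLast? := by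
      conv_lhs => rw [← List.take_append_drop (s+1) cs]
      rw [List.getLast?_append, ← hLdef, List.getLast?_eq_getLast hL]
      rfl
    rw [← h1, List.getLast?_eq_getLast hcsne]
  have hcsLenL : L = [] → cs.length = s + 1 := by
    intro hL
    have h1 : cs.length ≤ s + 1 := List.drop_eq_nil_iff.mp (hLdef ▸ hL)
    omega
  have hX : ((L.getLastD (v, v)).2) = (cs.getLast hcsne).2 := by
    by_cases hL : L = []
    · rw [hL]
      have hlen := hcsLenL hL
      have h4 : cs.getLast hcsne = cs[s]'hs := by
        rw [List.getLast_eq_getElem]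
        congr 1
        omega
      rw [h4]
      rfl
    · rw [List.getLastD_eq_getLast?, hLlast hL]
      rfl
  have hRdarts : (((P1.copy rfl hvw).append Q).copy rfl hX).darts
      = P.darts.take (2*j+1+1) ++ Q.darts := by
    rw [SimpleGraph.Walk.darts_copy, SimpleGraph.Walk.darts_append,
      SimpleGraph.Walk.darts_copy, hP1darts]
  have hPsup : P.support = α :: P.darts.map (fun d => d.toProd.2) := by
    conv_lhs => rw [SimpleGraph.Walk.support_eq_cons]
    rw [← SimpleGraph.Walk.map_snd_darts]
  refine ⟨((P1.copy rfl hvw).append Q).copy rfl hX, ?_, ?_, ?_, ?_⟩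
  · -- IsPath
    apply SimpleGraph.Walk.IsPath.mk'
    have hsupp : (((P1.copy rfl hvw).append Q).copy rfl hX).support
        = (α :: (P.darts.map (fun d => d.toProd.2)).take (2*j+1+1))
          ++ L.flatMap (fun a => [a.1, a.2]) := by
      rw [SimpleGraph.Walk.support_copy, SimpleGraph.Walk.support_append,
        SimpleGraph.Walk.support_copy]
      congr 1
      · conv_lhs => rw [SimpleGraph.Walk.support_eq_cons]
        rw [← SimpleGraph.Walk.map_snd_darts, hP1darts, List.map_take]
      · rw [← SimpleGraph.Walk.map_snd_darts]
        have h1 : Q.darts.map (fun x => x.toProd.2)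
            = (Q.darts.map SimpleGraph.Dart.toProd).map Prod.snd := by
          rw [List.map_map]
          rfl
        rw [h1, hQdarts, arcDarts_map_snd]
    rw [hsupp, List.nodup_append]
    have hcoverP : ∀ w ∈ (P.darts.map (fun d => d.toProd.2)).take (2*j+1+1),
        ∃ i, ∃ (hi : i < b.length), i ≤ j ∧ (w = (b[i]'hi).1 ∨ w = (b[i]'hi).2) := by
      intro w hw
      rw [List.mem_iff_getElem] at hw
      obtain ⟨k, hk, hwk⟩ := hw
      have hk2 : k < 2*j+1+1 := by
        rw [List.length_take] at hk
        exact lt_of_lt_of_le hk (min_le_left _ _)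
      have hk3 : k < P.darts.length := by
        rw [List.length_take, List.length_map] at hk
        omega
      rw [List.getElem_take, List.getElem_map] at hwk
      rcases Nat.mod_two_eq_zero_or_one k with hpar | hpar
      · obtain ⟨i, rfl⟩ : ∃ i, k = 2*i := ⟨k/2, by omega⟩
        have hij : i ≤ j := by omega
        have hib : i < b.length := by omega
        have hadj := (List.isChain_iff_getElem.mp P.isChain_dartAdj_darts) (2*i) (by omega)
        refine ⟨i, hib, hij, Or.inl ?_⟩
        rw [hbj' i hib (by omega), ← hwk]
        exact hadj
      · obtain ⟨i, rfl⟩ : ∃ i, k = 2*i+1 := ⟨k/2, by omega⟩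
        have hij : i ≤ j := by omega
        have hib : i < b.length := by omega
        refine ⟨i, hib, hij, Or.inr ?_⟩
        rw [hbj' i hib (by omega)]
        exact hwk.symm
    have hcoverL : ∀ w ∈ L.flatMap (fun a => [a.1, a.2]),
        ∃ k, ∃ (hk : k < cs.length), s < k ∧ (w = (cs[k]'hk).1 ∨ w = (cs[k]'hk).2) := by
      intro w hw
      rw [List.mem_flatMap] at hw
      obtain ⟨a, haL, hwa⟩ := hw
      rw [hLdef, List.mem_iff_getElem] at haL
      obtain ⟨r, hr, hra⟩ := haL
      have hrlen : s+1+r < cs.length := by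
        rw [List.length_drop] at hr; omega
      rw [List.getElem_drop] at hra
      refine ⟨s+1+r, hrlen, by omega, ?_⟩
      rw [hra]
      simpa using hwa
    have hkey : ∀ w, (∃ i, ∃ (hi : i < b.length), i ≤ j ∧ (w = (b[i]'hi).1 ∨ w = (b[i]'hi).2)) →
        (∃ k, ∃ (hk : k < cs.length), s < k ∧ (w = (cs[k]'hk).1 ∨ w = (cs[k]'hk).2)) → False := by
      rintro w ⟨i, hi, hij, hwi⟩ ⟨k, hk, hsk, hwk⟩
      have he1 : s((b[i]'hi).1, (b[i]'hi).2) ∈ M := hbM i hi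
      have he2 : s((cs[k]'hk).1, (cs[k]'hk).2) ∈ M := hcsM _ (List.getElem_mem hk)
      by_cases heq : s((b[i]'hi).1, (b[i]'hi).2) = s((cs[k]'hk).1, (cs[k]'hk).2)
      · have hmem : (b[i]'hi) ∈ cs ∨ (b[i]'hi).swap ∈ cs := by
          rw [Sym2.eq_iff] at heq
          rcases heq with ⟨h1, h2⟩ | ⟨h1, h2⟩
          · left
            have h3 : b[i]'hi = cs[k]'hk := Prod.ext h1 h2
            rw [h3]; exact List.getElem_mem hk
          · right
            have h3 : (b[i]'hi).swap = cs[k]'hk := Prod.ext h2 h1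
            rw [h3]; exact List.getElem_mem hk
        have hij' : ¬ i < j := fun hlt => hjmin i hlt hmem
        have hieq : i = j := by omega
        subst hieq
        have h5 : (cs.map fun a => s(a.1, a.2))[s]'(by simpa using hs)
            = (cs.map fun a => s(a.1, a.2))[k]'(by simpa using hk) := by
          rw [List.getElem_map, List.getElem_map, ← hbs]
          exact heq
        have h6 := (hcsnd.getElem_inj_iff).mp h5
        omega
      · refine hMdisj _ he1 _ he2 heq w ⟨?_, ?_⟩
        · rcases hwi with h | h <;> rw [h]
          · exact Sym2.mem_mk_left _ _
          · exact Sym2.mem_mk_right _ _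
        · rcases hwk with h | h <;> rw [h]
          · exact Sym2.mem_mk_left _ _
          · exact Sym2.mem_mk_right _ _
    refine ⟨?_, ?_, ?_⟩
    · have hsub : (α :: (P.darts.map (fun d => d.toProd.2)).take (2*j+1+1)) <+ P.support := by
        rw [hPsup]
        exact (List.take_sublist _ _).cons₂ α
      exact hsub.nodup hP.support_nodup
    · apply flatMap_pairs_nodup hMdisj
      · intro a ha; exact hcsM a (List.mem_of_mem_drop (hLdef ▸ ha))
      · intro a ha
        have hm := hcsM a (List.mem_of_mem_drop (hLdef ▸ ha))
        exact G.ne_of_adj ((G.mem_edgeSet).mp (hMsub hm))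
      · rw [hLdef, List.map_drop]
        exact List.Nodup.sublist (List.drop_sublist _ _) hcsnd
    · intro w hw1 w' hw2 hww'
      subst hww'
      rcases List.mem_cons.mp hw1 with rfl | hw1'
      · obtain ⟨k, hk, hsk, hwk⟩ := hcoverL _ hw2
        refine hα _ (hcsM _ (List.getElem_mem hk)) ?_
        rcases hwk with h | h <;> rw [h]
        · exact Sym2.mem_mk_left _ _
        · exact Sym2.mem_mk_right _ _
      · exact hkey w (hcoverP w hw1') (hcoverL w hw2)
  · -- AltEdges
    have hRedges : (((P1.copy rfl hvw).append Q).copy rfl hX).edges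
        = (P.darts.take (2*j+1+1)).map SimpleGraph.Dart.edge
          ++ Q.darts.map SimpleGraph.Dart.edge := by
      show (((P1.copy rfl hvw).append Q).copy rfl hX).darts.map SimpleGraph.Dart.edge = _
      rw [hRdarts, List.map_append]
    rw [hRedges]
    apply altEdges_append
    · rw [List.length_map, List.length_take]
      omega
    · have h1 : (P.darts.take (2*j+1+1)).map SimpleGraph.Dart.edge
          = P.edges.take (2*j+1+1) := by
        rw [List.map_take, ← hPedges]
      rw [h1]
      exact altEdges_take hPalt _
    · have h2 : Q.darts.map SimpleGraph.Dart.edge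
          = (arcDarts v L).map (fun q => s(q.1, q.2)) := by
        rw [← hQdarts, List.map_map]
        rfl
      rw [h2]
      exact arcDarts_alt v L hchainL
  · -- matchedArcs
    rw [matchedArcs_eq_filter M _ g hg, hRdarts, List.filter_append, List.map_append]
    congr 1
    · have h1 : (2*j+1+1) = 2*(j+1) := by ring
      rw [h1, oddFilter_take g P.darts hgP (j+1), List.map_take, hbfil]
    · set f : V × V → Bool := fun q => decide (s(q.1, q.2) ∈ M) with hfdef
      have hf : ∀ q : V × V, f q = true ↔ s(q.1, q.2) ∈ M := by
        intro q; rw [hfdef]; exact decide_eq_true_iff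
      have h1 : (Q.darts.map SimpleGraph.Dart.toProd).filter f = L := by
        rw [hQdarts]; exact arcDarts_filter f hf v L hchainL
      rw [List.filter_map] at h1
      refine Eq.trans ?_ h1
      congr 1
  · -- EndsWithArc
    show (((P1.copy rfl hvw).append Q).copy rfl hX).darts.getLast?.map SimpleGraph.Dart.toProd
      = some (cs.getLast hcsne)
    rw [hRdarts, List.getLast?_append]
    by_cases hL : L = []
    · have hQnil : Q.darts = [] :=
        (List.map_eq_nil_iff (f := SimpleGraph.Dart.toProd)).mp
          (hQdarts.trans ((congrArg (arcDarts v) hL).trans rfl))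
      rw [hQnil]
      rw [show ([] : List G.Dart).getLast? = none from rfl, Option.none_or]
      rw [getLast?_take_succ P.darts (2*j+1) hs2, Option.map_some]
      have h4 : cs.getLast hcsne = cs[s]'hs := by
        have := hcsLenL hL
        rw [List.getLast_eq_getElem]
        congr 1
        omega
      rw [h4, ← hbs, hbj' j hj hs2]
    · have hQne : Q.darts ≠ [] := by
        intro hnil
        rw [hnil] at hQdarts
        cases hLc : L with
        | nil => exact hL hLc
        | cons a L' => rw [hLc] at hQdarts; simp [arcDarts] at hQdarts
      rw [List.getLast?_eq_getLast hQne]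
      rw [show (some (Q.darts.getLast hQne)).or ((P.darts.take (2*j+1+1)).getLast?)
        = some (Q.darts.getLast hQne) from rfl]
      rw [Option.map_some]
      have h5 : (Q.darts.map SimpleGraph.Dart.toProd).getLast?
          = some ((Q.darts.getLast hQne).toProd) := by
        rw [List.getLast?_map, List.getLast?_eq_getLast hQne]
        rfl
      have h6 : (Q.darts.map SimpleGraph.Dart.toProd).getLast? = some (cs.getLast hcsne) := by
        rw [hQdarts, arcDarts_getLast? v L hL, hLlast hL]
      exact h5.symm.trans h6
end
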